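/- arXiv:1108.1886 — 3 statements merged into one kernel-verified Lean document; each statement's English description precedes it below -/
import Mathlib

section
/- Let (A, R) be a crystallographic arrangement in ℝ^r and E an intersection of hyperplanes of A. Then the restriction A^E := { E ∩ H : H ∈ A, E ⊄ H } is (together with an appropriate set of covectors on E) a crystallographic arrangement in E. -/
open scoped Classical Pointwise BigOperators

noncomputable section

abbrev Vr (r : ℕ) : Type := Fin r → ℝ

/-- The convex cone generated by a finite set of vectors. -/
def coneGen {M : Type*} [AddCommGroup M] [Module ℝ M] (s : Finset M) : Set M :=
  { x | ∃ c : M → ℝ, (∀ v, 0 ≤ c v) ∧ x = ∑ v ∈ s, c v • v }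

/-- Dimension of the linear span of a set. -/
def spanDim {M : Type*} [AddCommGroup M] [Module ℝ M] (s : Set M) : ℕ :=
  Module.finrank ℝ (Submodule.span ℝ s)

/-- A (linear) hyperplane: the kernel of a nonzero linear functional. -/
def IsHyp {M : Type*} [AddCommGroup M] [Module ℝ M] (H : Set M) : Prop :=
  ∃ f : M →ₗ[ℝ] ℝ, f ≠ 0 ∧ H = {x | f x = 0}

/-- A strongly convex rational polyhedral cone with respect to the lattice `N`. -/
def IsNCone {r : ℕ} (N : AddSubgroup (Vr r)) (σ : Set (Vr r)) : Prop :=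
  ∃ s : Finset (Vr r), ↑s ⊆ (N : Set (Vr r)) ∧ σ = coneGen s ∧ σ ∩ (-σ) ⊆ {0}

/-- `τ` is a face of `σ`. -/
def IsFaceOf {M : Type*} [AddCommGroup M] [Module ℝ M] (τ σ : Set M) : Prop :=
  ∃ m : M →ₗ[ℝ] ℝ, (∀ x ∈ σ, 0 ≤ m x) ∧ τ = σ ∩ {x | m x = 0}

/-- A fan in the lattice `N`. -/
structure IsFan {r : ℕ} (N : AddSubgroup (Vr r)) (F : Set (Set (Vr r))) : Prop where
  finite : F.Finite
  nonempty : F.Nonempty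
  cones : ∀ σ ∈ F, IsNCone N σ
  faces : ∀ σ ∈ F, ∀ τ : Set (Vr r), IsFaceOf τ σ → τ ∈ F
  inter : ∀ σ₁ ∈ F, ∀ σ₂ ∈ F, IsFaceOf (σ₁ ∩ σ₂) σ₁ ∧ IsFaceOf (σ₁ ∩ σ₂) σ₂

/-- Completeness: the support is everything. -/
def FanComplete {M : Type*} (F : Set (Set M)) : Prop := ⋃₀ F = Set.univ

/-- Strong symmetry: complete, and the support of the codimension-one cones is a
finite union of hyperplanes. -/
def SSymm {M : Type*} [AddCommGroup M] [Module ℝ M] (F : Set (Set M)) : Prop :=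
  FanComplete F ∧ ∃ Hs : Finset (Set M), (∀ h ∈ Hs, IsHyp h) ∧
    ⋃₀ {τ ∈ F | spanDim τ = Module.finrank ℝ M - 1} = ⋃₀ ↑Hs

/-- Central symmetry. -/
def CSymm {M : Type*} [AddCommGroup M] (F : Set (Set M)) : Prop := ∀ σ ∈ F, -σ ∈ F

/-- `b` is a ℤ-basis of the subgroup `L` of `ℝ^r`. -/
def IsZBasis {r d : ℕ} (L : AddSubgroup (Vr r)) (b : Fin d → Vr r) : Prop :=
  LinearIndependent ℝ b ∧ AddSubgroup.closure (Set.range b) = L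

/-- A (full-rank) lattice in `ℝ^r`. -/
def IsLattice {r : ℕ} (N : AddSubgroup (Vr r)) : Prop :=
  ∃ b : Fin r → Vr r, IsZBasis N b

/-- A cone generated by a part of a ℤ-basis of `L`. -/
def SmoothCone {r : ℕ} (L : AddSubgroup (Vr r)) (σ : Set (Vr r)) : Prop :=
  ∃ (d : ℕ) (b : Fin d → Vr r) (s : Finset (Fin d)),
    IsZBasis L b ∧ σ = coneGen (s.image b)

/-- Chambers of an arrangement: connected components of the complement. -/
def chambers {r : ℕ} (A : Finset (Set (Vr r))) : Set (Set (Vr r)) :=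
  { K | ∃ x ∈ (⋃₀ (A : Set (Set (Vr r))))ᶜ,
      K = connectedComponentIn (⋃₀ (A : Set (Set (Vr r))))ᶜ x }

/-- An open simplicial cone of full dimension. -/
def IsOpenSimplicialCone {r : ℕ} (K : Set (Vr r)) : Prop :=
  ∃ b : Fin r → Vr r, LinearIndependent ℝ b ∧
    K = { x | ∃ c : Fin r → ℝ, (∀ i, 0 < c i) ∧ x = ∑ i, c i • b i }

def ker0 {r : ℕ} (α : Vr r →ₗ[ℝ] ℝ) : Set (Vr r) := {x | α x = 0}

/-- Walls of a chamber `K`. -/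
def walls {r : ℕ} (A : Finset (Set (Vr r))) (K : Set (Vr r)) : Set (Set (Vr r)) :=
  { H | H ∈ A ∧ spanDim (H ∩ closure K) = r - 1 }

/-- The set `B^K` of inward-pointing normals of the walls of `K`. -/
def BK {r : ℕ} (A : Finset (Set (Vr r))) (R : Finset (Vr r →ₗ[ℝ] ℝ)) (K : Set (Vr r)) :
    Finset (Vr r →ₗ[ℝ] ℝ) :=
  R.filter (fun α => ker0 α ∈ walls A K ∧ K ⊆ {x | 0 ≤ α x})

/-- A crystallographic arrangement `(A, R)`. -/
structure IsCrystArr {r : ℕ} (A : Finset (Set (Vr r))) (R : Finset (Vr r →ₗ[ℝ] ℝ)) : Prop where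
  simplicial : ∀ K ∈ chambers A, IsOpenSimplicialCone K
  hyps : (A : Set (Set (Vr r))) = (fun α => ker0 α) '' (R : Set (Vr r →ₗ[ℝ] ℝ))
  nonzero : ∀ α ∈ R, α ≠ 0
  neg_mem : ∀ α ∈ R, -α ∈ R
  reduced : ∀ α ∈ R, ∀ β ∈ R, (∃ c : ℝ, β = c • α) → β = α ∨ β = -α
  integral : ∀ K ∈ chambers A, ∀ β ∈ R,
    β ∈ Submodule.span ℤ ((BK A R K : Set (Vr r →ₗ[ℝ] ℝ)))

/-- The set of all intersections of closed chambers of `A`. -/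
def closedChamberInts {r : ℕ} (A : Finset (Set (Vr r))) : Set (Set (Vr r)) :=
  { σ | ∃ S : Set (Set (Vr r)), S.Nonempty ∧ S ⊆ chambers A ∧ σ = ⋂₀ (closure '' S) }

/-- The lattice dual to `M_R = ∑_{α ∈ R} ℤ α`. -/
def dualLattice {r : ℕ} (R : Finset (Vr r →ₗ[ℝ] ℝ)) : AddSubgroup (Vr r) where
  carrier := { x | ∀ α ∈ R, ∃ k : ℤ, α x = k }
  zero_mem' := fun α _ => ⟨0, by simp⟩
  add_mem' := by
    intro x y hx hy α hα
    obtain ⟨k, hk⟩ := hx α hα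
    obtain ⟨m, hm⟩ := hy α hα
    exact ⟨k + m, by simp [hk, hm]⟩
  neg_mem' := by
    intro x hx α hα
    obtain ⟨k, hk⟩ := hx α hα
    exact ⟨-k, by simp [hk]⟩

/-- The star fan of `δ`, as a collection of cones in the quotient by `E`. -/
def starAt {r : ℕ} (F : Set (Set (Vr r))) (δ : Set (Vr r)) (E : Submodule ℝ (Vr r)) :
    Set (Set (Vr r ⧸ E)) :=
  { τ | ∃ σ ∈ F, δ ⊆ σ ∧ τ = E.mkQ '' σ }

/-- The positive roots `R_+^K` at the chamber `K`. -/
def RplusF {r : ℕ} (A : Finset (Set (Vr r))) (R : Finset (Vr r →ₗ[ℝ] ℝ)) (K : Set (Vr r)) :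
    Finset (Vr r →ₗ[ℝ] ℝ) :=
  R.filter (fun α => α ∈ coneGen (BK A R K))

/-- `ρ^K`, the half-sum of the positive roots at `K`. -/
def rhoK {r : ℕ} (A : Finset (Set (Vr r))) (R : Finset (Vr r →ₗ[ℝ] ℝ)) (K : Set (Vr r)) :
    Vr r →ₗ[ℝ] ℝ :=
  (1/2 : ℝ) • ∑ α ∈ RplusF A R K, α

end
/-!
The chambers of the restriction are the sign cells of the restricted covectors `β ∘ φ`. In such a
cell choose a point `x` at which as few roots as possible vanish; then every root vanishing at `φ x`
vanishes on all of `E = range φ`. Pushing `φ x` off the hyperplanes puts it in the closure of a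
chamber `K` of `A`, with basis `b` and wall covectors `w i`. A coordinate of `φ x` vanishes exactly
when the corresponding wall contains `E`, so `E` is spanned by the remaining `b j`, the cell of `x`
is the open cone on their preimages, and the remaining `w j ∘ φ` cut out its walls. Restricting
`R ⊆ span_ℤ {w i}` gives the integrality of the restricted covectors. Finally, the restricted
covectors with a common kernel are integer multiples of a primitive one, and these primitive
covectors together with their negatives form the root set of the restriction.
-/

open Filter Topology

namespace Arrangement

section Cells

variable {V : Type*} [AddCommGroup V] [Module ℝ V]

theorem exists_forall_apply_ne_zero (T : Finset (V →ₗ[ℝ] ℝ)) (hT : ∀ f ∈ T, f ≠ 0) :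
    ∃ x, ∀ f ∈ T, f x ≠ 0 := by
  by_contra! h
  have hcover : ⋃ f : T, (LinearMap.ker f.1 : Set V) = Set.univ :=
    Set.eq_univ_of_forall fun x => by
      obtain ⟨f, hf, hfx⟩ := h x
      exact Set.mem_iUnion.2 ⟨⟨f, hf⟩, hfx⟩
  obtain ⟨⟨f, hf⟩, hker⟩ := Subspace.exists_eq_top_of_iUnion_eq_univ hcover
  exact hT f hf (LinearMap.ker_eq_top.1 hker)

theorem mul_pos_of_mul_pos_of_mul_pos {a b c : ℝ} (hab : 0 < a * b) (hac : 0 < a * c) :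
    0 < b * c := by
  nlinarith [sq_nonneg a, sq_nonneg (b + c), sq_nonneg (b - c)]

def cell (T : Finset (V →ₗ[ℝ] ℝ)) (x : V) : Set V :=
  {y | ∀ f ∈ T, 0 < f x * f y}

variable {T : Finset (V →ₗ[ℝ] ℝ)}

theorem mem_cell_self {x : V} (hx : ∀ f ∈ T, f x ≠ 0) : x ∈ cell T x :=
  fun f hf => mul_self_pos.2 (hx f hf)

theorem apply_ne_zero_of_mem_cell {x y : V} (hy : y ∈ cell T x) {f : V →ₗ[ℝ] ℝ} (hf : f ∈ T) :
    f y ≠ 0 := by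
  intro h
  simpa [h] using hy f hf

theorem cell_eq_of_mem {x y : V} (hy : y ∈ cell T x) : cell T y = cell T x := by
  ext z
  exact ⟨fun hz f hf => mul_pos_of_mul_pos_of_mul_pos (mul_comm (f x) (f y) ▸ hy f hf) (hz f hf),
    fun hz f hf => mul_pos_of_mul_pos_of_mul_pos (hy f hf) (hz f hf)⟩

theorem convex_cell (x : V) : Convex ℝ (cell T x) := by
  intro y hy z hz a b ha hb hab f hf
  have hsplit : f x * f (a • y + b • z) = a * (f x * f y) + b * (f x * f z) := by
    simp only [map_add, map_smul, smul_eq_mul]; ring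
  rw [hsplit]
  rcases ha.eq_or_lt with rfl | ha
  · simpa [show b = 1 by linarith] using hz f hf
  · exact add_pos_of_pos_of_nonneg (mul_pos ha (hy f hf)) (mul_nonneg hb (hz f hf).le)

end Cells

section CellTopology

variable {V : Type*} [NormedAddCommGroup V] [NormedSpace ℝ V] [FiniteDimensional ℝ V]
  {T : Finset (V →ₗ[ℝ] ℝ)}

theorem mem_cell_of_mem_closure {x q : V} (hq : ∀ f ∈ T, f q ≠ 0)
    (hqx : q ∈ closure (cell T x)) : q ∈ cell T x := by
  intro f hf
  have hclosed : IsClosed {y : V | 0 ≤ f x * f y} :=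
    isClosed_le continuous_const (continuous_const.mul f.continuous_of_finiteDimensional)
  have hle : 0 ≤ f x * f q := closure_minimal (fun y hy => (hy f hf).le) hclosed hqx
  obtain ⟨y, hy⟩ := closure_nonempty_iff.1 ⟨q, hqx⟩
  exact hle.lt_of_ne (Ne.symm (mul_ne_zero (left_ne_zero_of_mul (hy f hf).ne') (hq f hf)))

theorem connectedComponentIn_eq_cell {x : V} (hx : ∀ f ∈ T, f x ≠ 0) :
    connectedComponentIn {y | ∀ f ∈ T, f y ≠ 0} x = cell T x := by
  apply Set.Subset.antisymm
  · intro y hy f hf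
    have hcont : Continuous fun z => f x * f z :=
      continuous_const.mul f.continuous_of_finiteDimensional
    have hsplit : connectedComponentIn {y | ∀ f ∈ T, f y ≠ 0} x ⊆
        {z | 0 < f x * f z} ∪ {z | f x * f z < 0} := fun z hz =>
      (mul_ne_zero (hx f hf) (connectedComponentIn_subset _ _ hz f hf)).lt_or_gt.symm
    refine isPreconnected_connectedComponentIn.subset_left_of_subset_union
      (isOpen_lt continuous_const hcont) (isOpen_lt hcont continuous_const)
      (Set.disjoint_left.2 fun _ h1 h2 => lt_asymm h1 (show _ < (0:ℝ) from h2)) hsplit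
      ⟨x, mem_connectedComponentIn hx, mul_self_pos.2 (hx f hf)⟩ hy
  · exact (convex_cell x).isPreconnected.subset_connectedComponentIn (mem_cell_self hx)
      fun y hy f hf => apply_ne_zero_of_mem_cell hy hf

end CellTopology

section Cones

variable {V : Type*} [AddCommGroup V] [Module ℝ V] {ι : Type*} [Fintype ι]

def posSpan (v : ι → V) : Set V :=
  {x | ∃ c : ι → ℝ, (∀ i, 0 < c i) ∧ x = ∑ i, c i • v i}

theorem mem_posSpan_iff (b : Module.Basis ι ℝ V) {x : V} :
    x ∈ posSpan b ↔ ∀ i, 0 < b.repr x i := by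
  constructor
  · rintro ⟨c, hc, rfl⟩
    rwa [b.repr_sum_self]
  · exact fun h => ⟨fun i => b.repr x i, h, (b.sum_repr x).symm⟩

theorem apply_eq_sum_repr_mul (b : Module.Basis ι ℝ V) (f : V →ₗ[ℝ] ℝ) (x : V) :
    f x = ∑ i, b.repr x i * f (b i) := by
  conv_lhs => rw [← b.sum_repr x]
  simp only [map_sum, map_smul, smul_eq_mul]

theorem apply_eq_repr_mul_of_apply_basis_eq_zero (b : Module.Basis ι ℝ V) {f : V →ₗ[ℝ] ℝ}
    {i : ι} (hf : ∀ j, j ≠ i → f (b j) = 0) (x : V) : f x = b.repr x i * f (b i) := by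
  rw [apply_eq_sum_repr_mul b, Finset.sum_eq_single i (fun j _ hj => by simp [hf j hj])
    (by simp)]

theorem mul_apply_eq_sum (b : Module.Basis ι ℝ V) (f : V →ₗ[ℝ] ℝ) (z u : V) :
    f z * f u = ∑ i, b.repr u i * (f z * f (b i)) := by
  rw [apply_eq_sum_repr_mul b f u, Finset.mul_sum]
  exact Finset.sum_congr rfl fun i _ => by ring

theorem forall_ne_of_card_filter_eq_card_sub_one {p : ι → Prop} [DecidablePred p]
    (hcard : (Finset.univ.filter p).card = Fintype.card ι - 1) {i : ι} (hi : ¬p i) :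
    ∀ j, j ≠ i → p j := by
  have hsum := Finset.card_filter_add_card_filter_not (s := Finset.univ) p
  have hpos : 0 < Fintype.card ι := Fintype.card_pos_iff.2 ⟨i⟩
  rw [hcard, Finset.card_univ] at hsum
  obtain ⟨i₁, hi₁⟩ := Finset.card_eq_one.1
    (show (Finset.univ.filter fun j => ¬p j).card = 1 by omega)
  have hsupp : ∀ j, ¬p j → j = i₁ := fun j hj => by
    have hmem : j ∈ Finset.univ.filter fun j => ¬p j := Finset.mem_filter.2 ⟨Finset.mem_univ j, hj⟩
    simpa [hi₁] using hmem
  exact fun j hj => by_contra fun hpj => hj ((hsupp j hpj).trans (hsupp i hi).symm)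

theorem span_ker_inter_nonneg_eq (b : Module.Basis ι ℝ V) {f : V →ₗ[ℝ] ℝ}
    (hf : ∀ i, 0 ≤ f (b i)) :
    Submodule.span ℝ ({x | f x = 0} ∩ {x | ∀ i, 0 ≤ b.repr x i}) =
      Submodule.span ℝ (b '' {i | f (b i) = 0}) := by
  classical
  apply le_antisymm
  · rw [Submodule.span_le]
    rintro x ⟨hfx, hx⟩
    refine b.mem_span_image.2 fun i hi => ?_
    have hterms := (Finset.sum_eq_zero_iff_of_nonneg fun j _ => mul_nonneg (hx j) (hf j)).1
      ((apply_eq_sum_repr_mul b f x).symm.trans hfx) i (Finset.mem_univ i)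
    exact (mul_eq_zero.1 hterms).resolve_left (Finsupp.mem_support_iff.1 hi)
  · refine Submodule.span_mono ?_
    rintro _ ⟨i, hi, rfl⟩
    refine ⟨hi, fun j => ?_⟩
    rw [b.repr_self_apply]
    split_ifs <;> norm_num

theorem spanDim_ker_inter_nonneg (b : Module.Basis ι ℝ V) {f : V →ₗ[ℝ] ℝ}
    (hf : ∀ i, 0 ≤ f (b i)) :
    spanDim ({x | f x = 0} ∩ {x | ∀ i, 0 ≤ b.repr x i}) =
      (Finset.univ.filter fun i => f (b i) = 0).card := by
  have hrange : Set.range (b ∘ (Subtype.val : {i // f (b i) = 0} → ι)) =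
      b '' {i | f (b i) = 0} := by
    rw [Set.range_comp, Subtype.range_coe_subtype]
  rw [spanDim, span_ker_inter_nonneg_eq b hf, ← hrange, ← Fintype.card_subtype,
    finrank_span_eq_card (b.linearIndependent.comp _ Subtype.val_injective)]

end Cones

section ConeTopology

variable {V : Type*} [NormedAddCommGroup V] [NormedSpace ℝ V] [FiniteDimensional ℝ V]
  {ι : Type*} [Fintype ι]

theorem closure_posSpan (b : Module.Basis ι ℝ V) :
    closure (posSpan b) = {x | ∀ i, 0 ≤ b.repr x i} := by
  let e := b.equivFun.toContinuousLinearEquiv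
  have hpos : posSpan b = e ⁻¹' Set.univ.pi fun _ => Set.Ioi 0 := by
    ext x; simp [mem_posSpan_iff, e]
  rw [hpos, ← e.preimage_closure, closure_pi_set]
  ext x; simp [e, Pi.le_def]

theorem basis_mem_closure_posSpan (b : Module.Basis ι ℝ V) (i : ι) : b i ∈ closure (posSpan b) := by
  classical
  rw [closure_posSpan]
  intro j
  rw [b.repr_self_apply]
  split_ifs <;> norm_num

theorem mul_apply_basis_nonneg {T : Finset (V →ₗ[ℝ] ℝ)} {z : V} {b : Module.Basis ι ℝ V}
    (hK : cell T z = posSpan b) {f : V →ₗ[ℝ] ℝ} (hf : f ∈ T) (i : ι) : 0 ≤ f z * f (b i) :=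
  closure_minimal (fun _ hu => (hu f hf).le)
    (isClosed_le continuous_const (continuous_const.mul f.continuous_of_finiteDimensional))
    (hK ▸ basis_mem_closure_posSpan b i)

end ConeTopology

theorem card_eq_of_basis {n : ℕ} {ι : Type*} [Fintype ι] (b : Module.Basis ι ℝ (Vr n)) :
    Fintype.card ι = n := by
  rw [← Module.finrank_eq_card_basis b, Module.finrank_fin_fun]

theorem isOpenSimplicialCone_posSpan {n : ℕ} {ι : Type*} [Fintype ι]
    (b : Module.Basis ι ℝ (Vr n)) : IsOpenSimplicialCone (posSpan b) := by
  let e : Fin n ≃ ι := (Fintype.equivFinOfCardEq (card_eq_of_basis b)).symm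
  refine ⟨b ∘ e, b.linearIndependent.comp e e.injective, ?_⟩
  ext x
  constructor
  · rintro ⟨c, hc, rfl⟩
    exact ⟨c ∘ e, fun i => hc (e i), (e.sum_comp fun i => c i • b i).symm⟩
  · rintro ⟨c, hc, rfl⟩
    exact ⟨c ∘ e.symm, fun i => hc (e.symm i),
      (e.symm.sum_comp fun i => c i • b (e i)).symm.trans (by simp)⟩

theorem exists_basis_eq_posSpan {n : ℕ} {K : Set (Vr n)} (hK : IsOpenSimplicialCone K) :
    ∃ b : Module.Basis (Fin n) ℝ (Vr n), K = posSpan b := by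
  classical
  obtain ⟨v, hv, rfl⟩ := hK
  exact ⟨basisOfPiSpaceOfLinearIndependent hv, by rw [coe_basisOfPiSpaceOfLinearIndependent]; rfl⟩

section Perturbation

variable {V : Type*} [AddCommGroup V] [Module ℝ V]

theorem eventually_pos_mul_apply_add_smul {f : V →ₗ[ℝ] ℝ} {y : V} (hy : f y ≠ 0) (w : V) :
    ∀ᶠ t in 𝓝 (0 : ℝ), 0 < f y * f (y + t • w) := by
  have hcont : Continuous fun t : ℝ => f y * (f y + t * f w) := by fun_prop
  have htend := hcont.tendsto 0
  simp only [zero_mul, add_zero] at htend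
  filter_upwards [htend.eventually_const_lt (mul_self_pos.2 hy)] with t ht
  simpa [map_add, map_smul] using ht

noncomputable def restrictRoots {W : Type*} [AddCommGroup W] [Module ℝ W] (R : Finset (V →ₗ[ℝ] ℝ))
    (φ : W →ₗ[ℝ] V) : Finset (W →ₗ[ℝ] ℝ) :=
  (R.image fun β => β ∘ₗ φ).filter (· ≠ 0)

variable {W : Type*} [AddCommGroup W] [Module ℝ W] {R : Finset (V →ₗ[ℝ] ℝ)} {φ : W →ₗ[ℝ] V}

theorem mem_restrictRoots {f : W →ₗ[ℝ] ℝ} :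
    f ∈ restrictRoots R φ ↔ (∃ β ∈ R, β ∘ₗ φ = f) ∧ f ≠ 0 := by
  simp [restrictRoots]

theorem exists_mem_cell_filter_ssubset {x : W} (hx : ∀ f ∈ restrictRoots R φ, f x ≠ 0)
    {β₀ : V →ₗ[ℝ] ℝ} (hβ₀ : β₀ ∈ R) (hβ₀x : β₀ (φ x) = 0) (hβ₀φ : β₀ ∘ₗ φ ≠ 0) :
    ∃ x' ∈ cell (restrictRoots R φ) x,
      (R.filter fun β => β (φ x') = 0) ⊂ R.filter fun β => β (φ x) = 0 := by
  obtain ⟨u, hu⟩ : ∃ u, β₀ (φ u) ≠ 0 := by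
    by_contra! h
    exact hβ₀φ (LinearMap.ext h)
  -- A small step from `x` along `u` keeps all nonzero signs and makes `β₀` nonzero.
  have hev : ∀ᶠ t in 𝓝 (0 : ℝ), ∀ β ∈ R, β (φ x) ≠ 0 →
      0 < β (φ x) * β (φ (x + t • u)) := by
    rw [Filter.eventually_all_finset]
    intro β _
    by_cases h : β (φ x) = 0
    · exact Filter.Eventually.of_forall fun _ h' => absurd h h'
    · filter_upwards [eventually_pos_mul_apply_add_smul h (φ u)] with t ht
      simpa [map_add, map_smul] using fun _ => ht
  obtain ⟨t, ht, ht0⟩ := (eventually_nhdsWithin_of_eventually_nhds (s := {0}ᶜ) hev).and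
    self_mem_nhdsWithin |>.exists
  refine ⟨x + t • u, fun f hf => ?_, (Finset.ssubset_iff_of_subset fun β hβ => ?_).2
    ⟨β₀, Finset.mem_filter.2 ⟨hβ₀, hβ₀x⟩, by simp [hβ₀x, hu, show t ≠ 0 from ht0]⟩⟩
  · obtain ⟨⟨β, hβ, rfl⟩, -⟩ := mem_restrictRoots.1 hf
    exact ht β hβ (hx _ hf)
  · rw [Finset.mem_filter] at hβ ⊢
    refine ⟨hβ.1, by_contra fun h => ?_⟩
    have hpos := ht β hβ.1 h
    rw [hβ.2, mul_zero] at hpos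
    exact lt_irrefl _ hpos

theorem exists_mem_cell_forall_comp_eq_zero (R : Finset (V →ₗ[ℝ] ℝ)) (φ : W →ₗ[ℝ] V) {x₀ : W}
    (hx₀ : ∀ f ∈ restrictRoots R φ, f x₀ ≠ 0) :
    ∃ x ∈ cell (restrictRoots R φ) x₀, ∀ β ∈ R, β (φ x) = 0 → β ∘ₗ φ = 0 := by
  suffices h : ∀ N, ∀ x ∈ cell (restrictRoots R φ) x₀,
      (R.filter fun β => β (φ x) = 0).card = N →
      ∃ x ∈ cell (restrictRoots R φ) x₀, ∀ β ∈ R, β (φ x) = 0 → β ∘ₗ φ = 0 from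
    h _ x₀ (mem_cell_self hx₀) rfl
  intro N
  induction N using Nat.strong_induction_on with
  | _ N ih =>
  intro x hx hN
  by_cases hgood : ∀ β ∈ R, β (φ x) = 0 → β ∘ₗ φ = 0
  · exact ⟨x, hx, hgood⟩
  push Not at hgood
  obtain ⟨β₀, hβ₀, hβ₀x, hβ₀φ⟩ := hgood
  obtain ⟨x', hx', hlt⟩ := exists_mem_cell_filter_ssubset
    (fun f hf => apply_ne_zero_of_mem_cell hx hf) hβ₀ hβ₀x hβ₀φ
  exact ih _ (hN ▸ Finset.card_lt_card hlt) x' (cell_eq_of_mem hx ▸ hx') rfl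

end Perturbation

section GenericPoints

variable {V : Type*} [NormedAddCommGroup V] [NormedSpace ℝ V]

theorem exists_generic_mem_closure_cell (T : Finset (V →ₗ[ℝ] ℝ)) (hT : ∀ f ∈ T, f ≠ 0)
    (y : V) : ∃ z, (∀ f ∈ T, f z ≠ 0) ∧ y ∈ closure (cell T z) := by
  obtain ⟨w, hw⟩ := exists_forall_apply_ne_zero T hT
  -- As `t → 0⁺`, `f (y + t • w)` takes the sign of `f y`, or of `f w` when `f y = 0`.
  have hsign : ∀ f ∈ T, ∃ s : ℝ, ∀ᶠ t in 𝓝[>] (0 : ℝ), 0 < s * f (y + t • w) := by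
    intro f hf
    by_cases hfy : f y = 0
    · refine ⟨f w, eventually_nhdsWithin_of_forall fun t (ht : 0 < t) => ?_⟩
      rw [map_add, map_smul, hfy, zero_add, smul_eq_mul, mul_left_comm]
      exact mul_pos ht (mul_self_pos.2 (hw f hf))
    · exact ⟨f y, eventually_nhdsWithin_of_eventually_nhds
        (eventually_pos_mul_apply_add_smul hfy w)⟩
  choose! s hs using hsign
  have hall : ∀ᶠ t in 𝓝[>] (0 : ℝ), ∀ f ∈ T, 0 < s f * f (y + t • w) :=
    (Filter.eventually_all_finset T).2 hs
  obtain ⟨t₀, ht₀⟩ := hall.exists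
  refine ⟨y + t₀ • w, fun f hf => right_ne_zero_of_mul (ht₀ f hf).ne', ?_⟩
  have htend : Tendsto (fun t : ℝ => y + t • w) (𝓝[>] 0) (𝓝 y) := by
    have hcont : Continuous fun t : ℝ => y + t • w := by fun_prop
    simpa using (hcont.tendsto 0).mono_left nhdsWithin_le_nhds
  exact mem_closure_of_tendsto htend
    (hall.mono fun t ht f hf => mul_pos_of_mul_pos_of_mul_pos (ht₀ f hf) (ht f hf))

end GenericPoints

section Chambers

variable {n : ℕ} {A : Finset (Set (Vr n))} {T : Finset (Vr n →ₗ[ℝ] ℝ)}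

theorem ker0_smul {f : Vr n →ₗ[ℝ] ℝ} {c : ℝ} (hc : c ≠ 0) : ker0 (c • f) = ker0 f := by
  ext x
  simp [ker0, hc]

theorem ker0_neg (f : Vr n →ₗ[ℝ] ℝ) : ker0 (-f) = ker0 f := by
  ext x
  simp [ker0]

theorem exists_smul_of_ker0_eq {f g : Vr n →ₗ[ℝ] ℝ} (h : ker0 f = ker0 g) :
    ∃ c : ℝ, g = c • f := by
  have hmem : g ∈ Submodule.span ℝ (Set.range fun _ : Unit => f) :=
    mem_span_of_iInf_ker_le_ker fun x hx => by
      have hfx : x ∈ ker0 f := by simpa [ker0] using hx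
      exact (h ▸ hfx : x ∈ ker0 g)
  rw [Set.range_const, Submodule.mem_span_singleton] at hmem
  obtain ⟨c, hc⟩ := hmem
  exact ⟨c, hc.symm⟩

theorem compl_sUnion_eq (hAT : (A : Set (Set (Vr n))) = (fun f => ker0 f) '' (T : Set _)) :
    (⋃₀ (A : Set (Set (Vr n))))ᶜ = {y | ∀ f ∈ T, f y ≠ 0} := by
  ext y
  simp [hAT, ker0]

theorem mem_chambers_iff (hAT : (A : Set (Set (Vr n))) = (fun f => ker0 f) '' (T : Set _))
    {K : Set (Vr n)} : K ∈ chambers A ↔ ∃ x, (∀ f ∈ T, f x ≠ 0) ∧ K = cell T x := by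
  simp only [chambers, compl_sUnion_eq hAT]
  constructor
  · rintro ⟨x, hx, rfl⟩
    exact ⟨x, hx, connectedComponentIn_eq_cell hx⟩
  · rintro ⟨x, hx, rfl⟩
    exact ⟨x, hx, (connectedComponentIn_eq_cell hx).symm⟩

end Chambers

/-- The crystallographic condition at a single chamber `K`, with the walls of `K` cut out by
covectors `w i ∈ T`. Unlike `IsCrystArr` it mentions no ambient arrangement, so it can be checked
on a restriction before the root set of the restriction is known. -/
def IsCrystChamber {V : Type*} [AddCommGroup V] [Module ℝ V] (T : Finset (V →ₗ[ℝ] ℝ))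
    (K : Set V) : Prop :=
  ∃ (ι : Type) (_ : Fintype ι) (b : Module.Basis ι ℝ V) (w : ι → V →ₗ[ℝ] ℝ),
    K = posSpan b ∧ (∀ i, w i ∈ T) ∧ (∀ i j, j ≠ i → w i (b j) = 0) ∧
      (∀ i, 0 < w i (b i)) ∧ ∀ β ∈ T, β ∈ Submodule.span ℤ (Set.range w)

section CrystChamber

variable {r : ℕ} {A : Finset (Set (Vr r))} {R : Finset (Vr r →ₗ[ℝ] ℝ)} {ι : Type*}
  {b : Module.Basis ι ℝ (Vr r)}

theorem exists_wall_covector [Fintype ι] (hcr : IsCrystArr A R) {z : Vr r} (hz : ∀ β ∈ R, β z ≠ 0)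
    (hK : cell R z = posSpan b) (i : ι) :
    ∃ β ∈ R, (∀ j, j ≠ i → β (b j) = 0) ∧ 0 < β (b i) := by
  classical
  set c : ι → ℝ := fun j => if j = i then 0 else 1
  set q := ∑ j, c j • b j
  have hqc : b.repr q = c := b.repr_sum_self c
  -- `q` lies on the boundary of the chamber, hence on some hyperplane of `A`.
  obtain ⟨β, hβR, hβq⟩ : ∃ β ∈ R, β q = 0 := by
    by_contra! hq
    have hcl : q ∈ closure (cell R z) := by
      rw [hK, closure_posSpan]
      intro j
      rw [hqc]
      positivity
    have hmem := (mem_posSpan_iff b).1 (hK ▸ mem_cell_of_mem_closure hq hcl) i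
    simp [hqc, c] at hmem
  have hsum := (mul_apply_eq_sum b β z q).symm.trans (by rw [hβq, mul_zero])
  have hzero : ∀ j, j ≠ i → β (b j) = 0 := by
    intro j hj
    have hterm := (Finset.sum_eq_zero_iff_of_nonneg fun k _ =>
      mul_nonneg (by simp only [hqc, c]; positivity) (mul_apply_basis_nonneg hK hβR k)).1
        hsum j (Finset.mem_univ j)
    simpa [hqc, c, hj, hz β hβR] using hterm
  have hβi : β (b i) ≠ 0 := by
    intro h
    refine hcr.nonzero β hβR (b.ext fun j => ?_)
    by_cases hj : j = i
    · simpa [hj] using h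
    · simpa using hzero j hj
  rcases hβi.lt_or_gt with hneg | hpos
  · exact ⟨-β, hcr.neg_mem β hβR, fun j hj => by simp [hzero j hj], by simpa using hneg⟩
  · exact ⟨β, hβR, hzero, hpos⟩

theorem eq_of_apply_basis (hcr : IsCrystArr A R) {α β : Vr r →ₗ[ℝ] ℝ} (hα : α ∈ R)
    (hβ : β ∈ R) {i : ι} (hα0 : ∀ j, j ≠ i → α (b j) = 0) (hαi : 0 < α (b i))
    (hβ0 : ∀ j, j ≠ i → β (b j) = 0) (hβi : 0 < β (b i)) : α = β := by
  have hprop : β = (β (b i) / α (b i)) • α := by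
    refine b.ext fun j => ?_
    by_cases hj : j = i
    · subst hj
      simp [hαi.ne']
    · simp [hα0 j hj, hβ0 j hj]
  rcases hcr.reduced α hα β hβ ⟨_, hprop⟩ with h | h
  · exact h.symm
  · have := hβi
    rw [h, LinearMap.neg_apply] at this
    linarith

theorem mem_range_of_mem_BK [Fintype ι] (hcr : IsCrystArr A R) {w : ι → Vr r →ₗ[ℝ] ℝ}
    (hwR : ∀ i, w i ∈ R) (hw0 : ∀ i j, j ≠ i → w i (b j) = 0) (hwpos : ∀ i, 0 < w i (b i))
    {α : Vr r →ₗ[ℝ] ℝ} (hα : α ∈ BK A R (posSpan b)) : α ∈ Set.range w := by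
  classical
  rw [BK, Finset.mem_filter] at hα
  obtain ⟨hαR, ⟨-, hwall⟩, hαK⟩ := hα
  have hnonneg : ∀ j, 0 ≤ α (b j) := fun j =>
    closure_minimal hαK (isClosed_le continuous_const α.continuous_of_finiteDimensional)
      (basis_mem_closure_posSpan b j)
  obtain ⟨i, hi⟩ : ∃ i, α (b i) ≠ 0 := by
    by_contra! h
    exact hcr.nonzero α hαR (b.ext fun j => by simpa using h j)
  rw [closure_posSpan, ker0, spanDim_ker_inter_nonneg b hnonneg] at hwall
  exact ⟨i, eq_of_apply_basis hcr (hwR i) hαR (hw0 i) (hwpos i)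
    (forall_ne_of_card_filter_eq_card_sub_one (hwall.trans (by rw [card_eq_of_basis b])) hi)
    ((hnonneg i).lt_of_ne' hi)⟩

theorem isCrystChamber_of_mem_chambers (hcr : IsCrystArr A R) {K : Set (Vr r)}
    (hK : K ∈ chambers A) : IsCrystChamber R K := by
  obtain ⟨b, hb⟩ := exists_basis_eq_posSpan (hcr.simplicial K hK)
  obtain ⟨z, hz, rfl⟩ := (mem_chambers_iff hcr.hyps).1 hK
  choose w hwR hw0 hwpos using exists_wall_covector hcr hz hb
  refine ⟨Fin r, inferInstance, b, w, hb, hwR, hw0, hwpos, fun β hβ => ?_⟩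
  refine Submodule.span_mono ?_ (hcr.integral _ hK β hβ)
  rw [hb]
  exact fun α hα => mem_range_of_mem_BK hcr hwR hw0 hwpos hα

end CrystChamber

theorem exists_basis_repr_eq_repr_comp {K V W : Type*} [Field K] [AddCommGroup V] [Module K V]
    [AddCommGroup W] [Module K W] {ι : Type*} {φ : W →ₗ[K] V} (hφ : Function.Injective φ)
    (B : Module.Basis ι K V) (J : Finset ι) (hoff : ∀ u i, i ∉ J → B.repr (φ u) i = 0)
    (hon : ∀ j ∈ J, B j ∈ LinearMap.range φ) :
    ∃ v : Module.Basis J K W, ∀ u (j : J), v.repr u j = B.repr (φ u) j := by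
  classical
  let ψ : W →ₗ[K] (J → K) := LinearMap.pi fun j => B.coord j ∘ₗ φ
  have hinj : Function.Injective ψ := by
    refine (injective_iff_map_eq_zero ψ).2 fun u hu => hφ ?_
    rw [map_zero]
    refine B.repr.injective (Finsupp.ext fun i => ?_)
    by_cases hi : i ∈ J
    · simpa [ψ] using congrFun hu ⟨i, hi⟩
    · simpa using hoff u i hi
  have hsurj : Function.Surjective ψ := by
    intro c
    obtain ⟨u, hu⟩ : ∑ j : J, c j • B j ∈ LinearMap.range φ :=
      Submodule.sum_mem _ fun j _ => Submodule.smul_mem _ _ (hon j j.2)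
    refine ⟨u, funext fun j => ?_⟩
    have hc : B.repr (∑ k : J, c k • B k) j = c j := by
      rw [map_sum, Finsupp.finsetSum_apply,
        Finset.sum_eq_single j (fun k _ hk => by
          simp [Subtype.val_injective.ne hk]) (by simp)]
      simp
    change B.repr (φ u) j = c j
    rw [hu, hc]
  exact ⟨.ofEquivFun (LinearEquiv.ofBijective ψ ⟨hinj, hsurj⟩), fun u j => rfl⟩

theorem comp_mem_span_comp {V W : Type*} [AddCommGroup V] [Module ℝ V] [AddCommGroup W]
    [Module ℝ W] {ι : Type*} (φ : W →ₗ[ℝ] V) {w : ι → V →ₗ[ℝ] ℝ} {γ : V →ₗ[ℝ] ℝ}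
    (hγ : γ ∈ Submodule.span ℤ (Set.range w)) :
    γ ∘ₗ φ ∈ Submodule.span ℤ (Set.range fun i => w i ∘ₗ φ) := by
  have h := Submodule.apply_mem_span_image_of_mem_span φ.dualMap.toAddMonoidHom.toIntLinearMap hγ
  rwa [← Set.range_comp] at h

section Restriction

variable {r d : ℕ} {A : Finset (Set (Vr r))} {R : Finset (Vr r →ₗ[ℝ] ℝ)} {φ : Vr d →ₗ[ℝ] Vr r}

noncomputable def restrictArr (A : Finset (Set (Vr r))) (φ : Vr d →ₗ[ℝ] Vr r) :
    Finset (Set (Vr d)) :=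
  (A.filter fun H => ¬Set.range φ ⊆ H).image (φ ⁻¹' ·)

theorem comp_eq_zero_iff {β : Vr r →ₗ[ℝ] ℝ} : β ∘ₗ φ = 0 ↔ Set.range φ ⊆ ker0 β := by
  constructor
  · rintro h _ ⟨u, rfl⟩
    exact LinearMap.congr_fun h u
  · exact fun h => LinearMap.ext fun u => h ⟨u, rfl⟩

theorem coe_restrictArr (hAR : (A : Set (Set (Vr r))) = (fun α => ker0 α) '' (R : Set _)) :
    (restrictArr A φ : Set (Set (Vr d))) =
      (fun f => ker0 f) '' (restrictRoots R φ : Set (Vr d →ₗ[ℝ] ℝ)) := by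
  ext h
  simp only [restrictArr, Finset.coe_image, Finset.coe_filter, Set.mem_image, Set.mem_ofPred_eq,
    Finset.mem_coe, mem_restrictRoots]
  constructor
  · rintro ⟨H, ⟨hH, hφH⟩, rfl⟩
    obtain ⟨β, hβ, rfl⟩ : H ∈ (fun α => ker0 α) '' (R : Set _) := hAR ▸ Finset.mem_coe.2 hH
    exact ⟨β ∘ₗ φ, ⟨⟨β, hβ, rfl⟩, mt comp_eq_zero_iff.1 hφH⟩, rfl⟩
  · rintro ⟨_, ⟨⟨β, hβ, rfl⟩, hβφ⟩, rfl⟩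
    have hβA : ker0 β ∈ (A : Set (Set (Vr r))) := hAR ▸ ⟨β, hβ, rfl⟩
    exact ⟨ker0 β, ⟨hβA, mt comp_eq_zero_iff.2 hβφ⟩, rfl⟩

theorem comp_wall_mem_restrictRoots {ι : Type*} {B : Module.Basis ι ℝ (Vr r)}
    {w : ι → Vr r →ₗ[ℝ] ℝ} (hwR : ∀ i, w i ∈ R) (hwpos : ∀ i, 0 < w i (B i)) {j : ι}
    (hj : B j ∈ LinearMap.range φ) : w j ∘ₗ φ ∈ restrictRoots R φ := by
  obtain ⟨u, hu⟩ := hj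
  refine mem_restrictRoots.2 ⟨⟨w j, hwR j, rfl⟩, fun h => (hwpos j).ne' ?_⟩
  rw [← hu]
  exact LinearMap.congr_fun h u

end Restriction

section Face

variable {r d : ℕ} {R : Finset (Vr r →ₗ[ℝ] ℝ)} {φ : Vr d →ₗ[ℝ] Vr r} {ι : Type*}
  {B : Module.Basis ι ℝ (Vr r)} {w : ι → Vr r →ₗ[ℝ] ℝ} {x : Vr d}

theorem comp_eq_zero_of_repr_eq_zero [Fintype ι] (hvan : ∀ β ∈ R, β (φ x) = 0 → β ∘ₗ φ = 0)
    (hwR : ∀ i, w i ∈ R) (hw0 : ∀ i j, j ≠ i → w i (B j) = 0) {i : ι}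
    (hi : B.repr (φ x) i = 0) : w i ∘ₗ φ = 0 :=
  hvan _ (hwR i) (by rw [apply_eq_repr_mul_of_apply_basis_eq_zero B (hw0 i), hi, zero_mul])

theorem repr_comp_eq_zero_of_repr_eq_zero [Fintype ι] (hvan : ∀ β ∈ R, β (φ x) = 0 → β ∘ₗ φ = 0)
    (hwR : ∀ i, w i ∈ R) (hw0 : ∀ i j, j ≠ i → w i (B j) = 0) (hwpos : ∀ i, 0 < w i (B i))
    {i : ι} (hi : B.repr (φ x) i = 0) (u : Vr d) : B.repr (φ u) i = 0 := by
  have h := LinearMap.congr_fun (comp_eq_zero_of_repr_eq_zero hvan hwR hw0 hi) u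
  rw [LinearMap.comp_apply, apply_eq_repr_mul_of_apply_basis_eq_zero B (hw0 i)] at h
  exact (mul_eq_zero.1 h).resolve_right (hwpos i).ne'

theorem basis_mem_range [Fintype ι] {S' : Finset (Vr r →ₗ[ℝ] ℝ)} (hS' : S' ⊆ R)
    (hran : Set.range φ = {y | ∀ α ∈ S', α y = 0}) {z : Vr r} (hz : ∀ β ∈ R, β z ≠ 0)
    (hK : cell R z = posSpan B) (hx : ∀ i, 0 ≤ B.repr (φ x) i) {j : ι}
    (hj : 0 < B.repr (φ x) j) : B j ∈ LinearMap.range φ := by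
  change B j ∈ Set.range φ
  rw [hran]
  intro α hα
  -- `α` has constant sign on the closed chamber and vanishes at `φ x`, a combination of the
  -- `B i` with nonnegative coefficients.
  have hαx : α (φ x) = 0 := (hran ▸ Set.mem_range_self x : φ x ∈ {y | ∀ α ∈ S', α y = 0}) α hα
  have hsum := (mul_apply_eq_sum B α z (φ x)).symm.trans (by rw [hαx, mul_zero])
  have hterm := (Finset.sum_eq_zero_iff_of_nonneg fun i _ =>
    mul_nonneg (hx i) (mul_apply_basis_nonneg hK (hS' hα) i)).1 hsum j (Finset.mem_univ j)
  simpa [hj.ne', hz α (hS' hα)] using hterm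

variable {J : Finset ι} {v : Module.Basis J ℝ (Vr d)}

theorem comp_basis_eq (hoff : ∀ u i, i ∉ J → B.repr (φ u) i = 0)
    (hv : ∀ u (j : J), v.repr u j = B.repr (φ u) j) (j : J) : φ (v j) = B j := by
  classical
  refine B.repr.injective (Finsupp.ext fun i => ?_)
  by_cases hi : i ∈ J
  · rw [← hv (v j) ⟨i, hi⟩, v.repr_self, B.repr_self, Finsupp.single_apply,
      Finsupp.single_apply]
    simp [Subtype.ext_iff]
  · rw [hoff _ i hi, B.repr_self, Finsupp.single_apply, if_neg]
    rintro rfl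
    exact hi j.2

theorem apply_comp_eq_sum [Fintype ι] (hoff : ∀ u i, i ∉ J → B.repr (φ u) i = 0)
    (hv : ∀ u (j : J), v.repr u j = B.repr (φ u) j) (β : Vr r →ₗ[ℝ] ℝ) (u : Vr d) :
    β (φ u) = ∑ j : J, v.repr u j * β (B j) := by
  rw [apply_eq_sum_repr_mul B β (φ u), ← Finset.sum_subset (Finset.subset_univ J)
    fun i _ hi => by rw [hoff u i hi, zero_mul], ← Finset.sum_coe_sort J]
  simp only [hv]

theorem pos_mul_apply_comp_of_mem_posSpan [Fintype ι] {z : Vr r} (hz : ∀ β ∈ R, β z ≠ 0)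
    (hK : cell R z = posSpan B) (hoff : ∀ u i, i ∉ J → B.repr (φ u) i = 0)
    (hv : ∀ u (j : J), v.repr u j = B.repr (φ u) j) {β : Vr r →ₗ[ℝ] ℝ} (hβ : β ∈ R)
    (hβφ : β ∘ₗ φ ≠ 0) {u : Vr d} (hu : u ∈ posSpan v) : 0 < β z * β (φ u) := by
  rw [mem_posSpan_iff] at hu
  rw [apply_comp_eq_sum hoff hv, Finset.mul_sum]
  have hnonneg : ∀ j : J, 0 ≤ v.repr u j * (β z * β (B j)) :=
    fun j => mul_nonneg (hu j).le (mul_apply_basis_nonneg hK hβ j)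
  refine Finset.sum_pos' (fun j _ => by simpa only [mul_left_comm] using hnonneg j) ?_
  by_contra! hall
  refine hβφ (LinearMap.ext fun u' => ?_)
  have hβB : ∀ j : J, β (B j) = 0 := fun j => by
    have h := le_antisymm (by simpa only [mul_left_comm] using hall j (Finset.mem_univ j))
      (hnonneg j)
    simpa [(hu j).ne', hz β hβ] using h
  simp [apply_comp_eq_sum hoff hv, hβB]

theorem cell_restrictRoots_eq_posSpan [Fintype ι] {z : Vr r} (hz : ∀ β ∈ R, β z ≠ 0)
    (hK : cell R z = posSpan B) (hwR : ∀ i, w i ∈ R) (hw0 : ∀ i j, j ≠ i → w i (B j) = 0)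
    (hwpos : ∀ i, 0 < w i (B i)) (hoff : ∀ u i, i ∉ J → B.repr (φ u) i = 0)
    (hv : ∀ u (j : J), v.repr u j = B.repr (φ u) j) (hJ : ∀ j : J, 0 < B.repr (φ x) j) :
    cell (restrictRoots R φ) x = posSpan v := by
  have hxv : x ∈ posSpan v := (mem_posSpan_iff v).2 fun j => (hv x j).symm ▸ hJ j
  apply Set.Subset.antisymm
  · intro u hu
    refine (mem_posSpan_iff v).2 fun j => ?_
    have hprod := hu _ (comp_wall_mem_restrictRoots hwR hwpos ⟨v j, comp_basis_eq hoff hv j⟩)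
    rw [LinearMap.comp_apply, LinearMap.comp_apply,
      apply_eq_repr_mul_of_apply_basis_eq_zero B (hw0 j) (φ x),
      apply_eq_repr_mul_of_apply_basis_eq_zero B (hw0 j) (φ u)] at hprod
    rw [hv]
    exact pos_of_mul_pos_left (pos_of_mul_pos_right hprod (mul_pos (hJ j) (hwpos j)).le)
      (hwpos j).le
  · intro u hu f hf
    obtain ⟨⟨β, hβ, rfl⟩, hβφ⟩ := mem_restrictRoots.1 hf
    exact mul_pos_of_mul_pos_of_mul_pos
      (pos_mul_apply_comp_of_mem_posSpan hz hK hoff hv hβ hβφ hxv)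
      (pos_mul_apply_comp_of_mem_posSpan hz hK hoff hv hβ hβφ hu)

end Face

section RestrictedChambers

variable {r d : ℕ} {A : Finset (Set (Vr r))} {R : Finset (Vr r →ₗ[ℝ] ℝ)} {φ : Vr d →ₗ[ℝ] Vr r}
  {S' : Finset (Vr r →ₗ[ℝ] ℝ)}

theorem isCrystChamber_cell_restrictRoots (hcr : IsCrystArr A R) (hφ : Function.Injective φ)
    (hS' : S' ⊆ R) (hran : Set.range φ = {y | ∀ α ∈ S', α y = 0}) {x : Vr d}
    (hvan : ∀ β ∈ R, β (φ x) = 0 → β ∘ₗ φ = 0) :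
    IsCrystChamber (restrictRoots R φ) (cell (restrictRoots R φ) x) := by
  classical
  obtain ⟨z, hz, hxz⟩ := exists_generic_mem_closure_cell R hcr.nonzero (φ x)
  obtain ⟨ι, _, B, w, hK, hwR, hw0, hwpos, hint⟩ :=
    isCrystChamber_of_mem_chambers hcr ((mem_chambers_iff hcr.hyps).2 ⟨z, hz, rfl⟩)
  have hx : ∀ i, 0 ≤ B.repr (φ x) i := by rwa [hK, closure_posSpan] at hxz
  -- The walls of `K` off the support `J` of `φ x` contain `range φ`; the others cut out the
  -- walls of the cell of `x`.
  set J := Finset.univ.filter fun i => B.repr (φ x) i ≠ 0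
  have hJ : ∀ j : J, 0 < B.repr (φ x) j := fun j =>
    (hx j).lt_of_ne' (Finset.mem_filter.1 j.2).2
  have hJc : ∀ i, i ∉ J → B.repr (φ x) i = 0 := fun i hi => by simpa [J] using hi
  have hoff : ∀ u i, i ∉ J → B.repr (φ u) i = 0 := fun u i hi =>
    repr_comp_eq_zero_of_repr_eq_zero hvan hwR hw0 hwpos (hJc i hi) u
  obtain ⟨v, hv⟩ := exists_basis_repr_eq_repr_comp hφ B J hoff fun j hj =>
    basis_mem_range hS' hran hz hK hx (hJ ⟨j, hj⟩)
  refine ⟨J, inferInstance, v, fun j => w j ∘ₗ φ,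
    cell_restrictRoots_eq_posSpan hz hK hwR hw0 hwpos hoff hv hJ,
    fun j => comp_wall_mem_restrictRoots hwR hwpos ⟨v j, comp_basis_eq hoff hv j⟩,
    fun i j hij => ?_, fun i => ?_, fun f hf => ?_⟩
  · simp [comp_basis_eq hoff hv, hw0 i j (Subtype.val_injective.ne hij)]
  · simpa [comp_basis_eq hoff hv] using hwpos i
  · obtain ⟨⟨γ, hγ, rfl⟩, -⟩ := mem_restrictRoots.1 hf
    refine Submodule.span_le.2 ?_ (comp_mem_span_comp φ (hint γ hγ))
    rintro _ ⟨i, rfl⟩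
    by_cases hi : i ∈ J
    · exact Submodule.subset_span ⟨⟨i, hi⟩, rfl⟩
    · simp only [comp_eq_zero_of_repr_eq_zero hvan hwR hw0 (hJc i hi), SetLike.mem_coe,
        zero_mem]

theorem isCrystChamber_of_mem_chambers_restrictArr (hcr : IsCrystArr A R)
    (hφ : Function.Injective φ) (hS' : S' ⊆ R) (hran : Set.range φ = {y | ∀ α ∈ S', α y = 0})
    {K : Set (Vr d)} (hK : K ∈ chambers (restrictArr A φ)) :
    IsCrystChamber (restrictRoots R φ) K := by
  obtain ⟨x₀, hx₀, rfl⟩ := (mem_chambers_iff (coe_restrictArr hcr.hyps)).1 hK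
  obtain ⟨x, hx, hvan⟩ := exists_mem_cell_forall_comp_eq_zero R φ hx₀
  rw [← cell_eq_of_mem hx]
  exact isCrystChamber_cell_restrictRoots hcr hφ hS' hran hvan

end RestrictedChambers

section Primitive

variable {V : Type*} [AddCommGroup V] [Module ℝ V]

theorem exists_int_of_mem_span {κ : V →ₗ[ℝ] ℝ} {s : Set V} (hs : ∀ f ∈ s, ∃ k : ℤ, κ f = k)
    {f : V} (hf : f ∈ Submodule.span ℤ s) : ∃ k : ℤ, κ f = k := by
  induction hf using Submodule.span_induction with
  | mem f hf => exact hs f hf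
  | zero => exact ⟨0, by simp⟩
  | add f g _ _ hf hg =>
    obtain ⟨k, hk⟩ := hf
    obtain ⟨l, hl⟩ := hg
    exact ⟨k + l, by simp [hk, hl]⟩
  | smul a f _ hf =>
    obtain ⟨k, hk⟩ := hf
    exact ⟨a * k, by simp [hk]⟩

theorem exists_smul_of_mem_span {C : Set V} {δ : V} (hC : ∀ f ∈ C, ∃ c : ℝ, f = c • δ) {f : V}
    (hf : f ∈ Submodule.span ℤ C) : ∃ c : ℝ, f = c • δ := by
  induction hf using Submodule.span_induction with
  | mem f hf => exact hC f hf
  | zero => exact ⟨0, by simp⟩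
  | add f g _ _ hf hg =>
    obtain ⟨a, rfl⟩ := hf
    obtain ⟨b, rfl⟩ := hg
    exact ⟨a + b, by rw [add_smul]⟩
  | smul k f _ hf =>
    obtain ⟨a, rfl⟩ := hf
    exact ⟨k * a, by rw [← Int.cast_smul_eq_zsmul ℝ, smul_smul]⟩

theorem exists_primitive_of_apply_int {C : Set V} {δ : V} (hδ : δ ∈ C)
    (hC : ∀ f ∈ C, ∃ c : ℝ, f = c • δ) {κ : V →ₗ[ℝ] ℝ} (hκδ : κ δ ≠ 0)
    (hκ : ∀ f ∈ C, ∃ k : ℤ, κ f = k) :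
    ∃ γ ∈ Submodule.span ℤ C, (∃ c : ℝ, c ≠ 0 ∧ γ = c • δ) ∧ ∀ f ∈ C, ∃ k : ℤ, f = k • γ := by
  set H : AddSubgroup ℝ := (Submodule.span ℤ C).toAddSubgroup.map κ.toAddMonoidHom
  -- The values of `κ` on the span are integers, so `H` is a discrete, hence cyclic, subgroup.
  have hd : Disjoint (H : Set ℝ) (Set.Ioo 0 1) := by
    refine Set.disjoint_left.2 ?_
    rintro _ ⟨f, hf, rfl⟩ ⟨h0, h1⟩
    obtain ⟨k, hk⟩ := exists_int_of_mem_span hκ hf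
    simp only [LinearMap.toAddMonoidHom_coe, hk] at h0 h1
    have h0' : 0 < k := by exact_mod_cast h0
    have h1' : k < 1 := by exact_mod_cast h1
    omega
  obtain ⟨g, hg⟩ := AddSubgroup.cyclic_of_isolated_zero one_pos hd
  obtain ⟨γ, hγ, rfl⟩ : g ∈ H := hg ▸ AddSubgroup.subset_closure rfl
  have hline : ∀ f ∈ Submodule.span ℤ C, ∃ c : ℝ, f = c • δ := fun f hf =>
    exists_smul_of_mem_span hC hf
  obtain ⟨c, hc⟩ := hline γ hγ
  have hmul : ∀ f ∈ C, ∃ k : ℤ, f = k • γ := by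
    intro f hf
    have hκf : κ f ∈ H := ⟨f, Submodule.subset_span hf, rfl⟩
    rw [hg, AddSubgroup.mem_closure_singleton] at hκf
    obtain ⟨k, hk⟩ := hκf
    refine ⟨k, ?_⟩
    obtain ⟨a, rfl⟩ := hC f hf
    simp only [LinearMap.toAddMonoidHom_coe, hc, map_smul, smul_eq_mul, zsmul_eq_mul] at hk
    have ha : k * c = a := mul_right_cancel₀ hκδ (by rw [mul_assoc, hk])
    rw [hc, ← Int.cast_smul_eq_zsmul ℝ, smul_smul, ha]
  refine ⟨γ, hγ, ⟨c, fun hc0 => hκδ ?_, hc⟩, hmul⟩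
  obtain ⟨k, hk⟩ := hmul δ hδ
  rw [hk, hc, hc0, zero_smul, smul_zero, map_zero]

theorem IsCrystChamber.exists_int_linearMap {T : Finset (V →ₗ[ℝ] ℝ)} {K : Set V}
    (hK : IsCrystChamber T K) {δ : V →ₗ[ℝ] ℝ}
    (hδ : δ ≠ 0) : ∃ κ : (V →ₗ[ℝ] ℝ) →ₗ[ℝ] ℝ, κ δ ≠ 0 ∧ ∀ f ∈ T, ∃ k : ℤ, κ f = k := by
  obtain ⟨ι, _, b, w, -, -, hw0, hwpos, hint⟩ := hK
  obtain ⟨i, hi⟩ : ∃ i, δ (b i) ≠ 0 := by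
    by_contra! h
    exact hδ (b.ext fun i => by simpa using h i)
  -- Evaluation at `b i`, normalised so that the wall covectors take the values `0` and `1`.
  refine ⟨(w i (b i))⁻¹ • LinearMap.applyₗ (b i), by simp [hi, (hwpos i).ne'],
    fun f hf => exists_int_of_mem_span ?_ (hint f hf)⟩
  rintro _ ⟨j, rfl⟩
  by_cases hj : i = j
  · subst hj
    exact ⟨1, by simp [(hwpos i).ne']⟩
  · exact ⟨0, by simp [hw0 j i hj]⟩

end Primitive

section FromChambers

variable {n : ℕ} {A : Finset (Set (Vr n))} {T : Finset (Vr n →ₗ[ℝ] ℝ)}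

theorem exists_primitive_covector
    (hAT : (A : Set (Set (Vr n))) = (fun f => ker0 f) '' (T : Set _)) (hT : ∀ f ∈ T, f ≠ 0)
    {K₀ : Set (Vr n)} (hK₀ : IsCrystChamber T K₀) {h : Set (Vr n)} (hh : h ∈ A) :
    ∃ γ ∈ Submodule.span ℤ (T : Set (Vr n →ₗ[ℝ] ℝ)), γ ≠ 0 ∧ ker0 γ = h ∧
      ∀ f ∈ T, ker0 f = h → ∃ k : ℤ, f = k • γ := by
  obtain ⟨δ, hδT, rfl⟩ : h ∈ (fun f => ker0 f) '' (T : Set _) := hAT ▸ Finset.mem_coe.2 hh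
  obtain ⟨κ, hκδ, hκ⟩ := hK₀.exists_int_linearMap (hT δ hδT)
  obtain ⟨γ, hγ, ⟨c, hc0, rfl⟩, hmul⟩ :=
    exists_primitive_of_apply_int (C := {f | f ∈ T ∧ ker0 f = ker0 δ}) ⟨hδT, rfl⟩
      (fun f hf => exists_smul_of_ker0_eq hf.2.symm) hκδ (fun f hf => hκ f hf.1)
  exact ⟨_, Submodule.span_mono (fun f hf => hf.1) hγ, smul_ne_zero hc0 (hT δ hδT),
    ker0_smul hc0, fun f hf hfh => hmul f ⟨hf, hfh⟩⟩

theorem mem_BK_of_eq_nsmul {ι : Type*} [Fintype ι] {b : Module.Basis ι ℝ (Vr n)}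
    {w : ι → Vr n →ₗ[ℝ] ℝ} (hw0 : ∀ i j, j ≠ i → w i (b j) = 0) (hwpos : ∀ i, 0 < w i (b i))
    {R' : Finset (Vr n →ₗ[ℝ] ℝ)} {g : Vr n →ₗ[ℝ] ℝ} (hg : g ∈ R') {i : ι}
    (hA : ker0 (w i) ∈ A) {m : ℕ} (hm : w i = m • g) : g ∈ BK A R' (posSpan b) := by
  classical
  have hm0 : (m : ℝ) ≠ 0 := by
    rintro h
    have hwi := hwpos i
    rw [hm, ← Nat.cast_smul_eq_nsmul ℝ, h, zero_smul] at hwi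
    exact lt_irrefl _ hwi
  have hker : ker0 g = ker0 (w i) := by rw [hm, ← Nat.cast_smul_eq_nsmul ℝ, ker0_smul hm0]
  have hnonneg : ∀ j, 0 ≤ w i (b j) := fun j => by
    by_cases hj : j = i
    · exact hj ▸ (hwpos i).le
    · rw [hw0 i j hj]
  have hzero : (Finset.univ.filter fun j => w i (b j) = 0) = Finset.univ.erase i := by
    ext j
    by_cases hj : j = i
    · simp [hj, (hwpos i).ne']
    · simp [hj, hw0 i j hj]
  rw [BK, Finset.mem_filter]
  refine ⟨hg, ⟨hker ▸ hA, ?_⟩, fun u hu => ?_⟩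
  · rw [hker, closure_posSpan, ker0, spanDim_ker_inter_nonneg b hnonneg, hzero,
      Finset.card_erase_of_mem (Finset.mem_univ i), Finset.card_univ, card_eq_of_basis b]
  · have hwu : 0 < w i u := by
      rw [apply_eq_repr_mul_of_apply_basis_eq_zero b (hw0 i)]
      exact mul_pos ((mem_posSpan_iff b).1 hu i) (hwpos i)
    rw [hm, LinearMap.smul_apply, nsmul_eq_mul] at hwu
    exact (pos_of_mul_pos_right hwu (Nat.cast_nonneg m)).le

theorem span_le_span_BK (hAT : (A : Set (Set (Vr n))) = (fun f => ker0 f) '' (T : Set _))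
    {γ : ∀ h : Set (Vr n), h ∈ A → Vr n →ₗ[ℝ] ℝ}
    (hγmul : ∀ h (hh : h ∈ A), ∀ f ∈ T, ker0 f = h → ∃ k : ℤ, f = k • γ h hh)
    {R' : Finset (Vr n →ₗ[ℝ] ℝ)} (hR' : ∀ h (hh : h ∈ A), γ h hh ∈ R' ∧ -γ h hh ∈ R')
    {K : Set (Vr n)} (hK : IsCrystChamber T K) :
    Submodule.span ℤ (T : Set (Vr n →ₗ[ℝ] ℝ)) ≤ Submodule.span ℤ (BK A R' K : Set _) := by
  obtain ⟨ι, _, b, w, rfl, hwT, hw0, hwpos, hint⟩ := hK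
  refine Submodule.span_le.2 fun f hf =>
    Submodule.span_le.2 (Set.range_subset_iff.2 fun i => ?_) (hint f hf)
  have hA : ker0 (w i) ∈ A := Finset.mem_coe.1 (hAT ▸ ⟨w i, hwT i, rfl⟩)
  obtain ⟨k, hk⟩ := hγmul _ hA (w i) (hwT i) rfl
  obtain ⟨m, rfl | rfl⟩ := Int.eq_nat_or_neg k
  · rw [natCast_zsmul] at hk
    rw [SetLike.mem_coe, hk]
    exact nsmul_mem (Submodule.subset_span (mem_BK_of_eq_nsmul hw0 hwpos (hR' _ hA).1 hA hk)) m
  · rw [neg_smul, natCast_zsmul, ← neg_nsmul] at hk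
    rw [SetLike.mem_coe, hk]
    exact nsmul_mem (Submodule.subset_span (mem_BK_of_eq_nsmul hw0 hwpos (hR' _ hA).2 hA hk)) m

theorem exists_isCrystArr_of_isCrystChamber
    (hAT : (A : Set (Set (Vr n))) = (fun f => ker0 f) '' (T : Set _)) (hT : ∀ f ∈ T, f ≠ 0)
    (hK : ∀ K ∈ chambers A, IsCrystChamber T K) : ∃ R', IsCrystArr A R' := by
  classical
  obtain ⟨x₀, hx₀⟩ := exists_forall_apply_ne_zero T hT
  choose γ hγT hγ0 hγker hγmul using fun h (hh : h ∈ A) =>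
    exists_primitive_covector hAT hT (hK _ ((mem_chambers_iff hAT).2 ⟨x₀, hx₀, rfl⟩)) hh
  -- The root set: the two primitive covectors `± γ h` of each hyperplane `h`.
  set R' := A.attach.biUnion fun h => {γ h.1 h.2, -γ h.1 h.2}
  have hR' : ∀ g, g ∈ R' ↔ ∃ h, ∃ hh : h ∈ A, g = γ h hh ∨ g = -γ h hh := fun g => by
    simp [R']
  have hker : ∀ g h (hh : h ∈ A), (g = γ h hh ∨ g = -γ h hh) → ker0 g = h := by
    rintro g h hh (rfl | rfl)
    exacts [hγker h hh, (ker0_neg _).trans (hγker h hh)]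
  have hR'0 : ∀ g ∈ R', g ≠ 0 := fun g hg => by
    obtain ⟨h, hh, rfl | rfl⟩ := (hR' g).1 hg
    exacts [hγ0 h hh, neg_ne_zero.2 (hγ0 h hh)]
  refine ⟨R', fun K hKA => ?_, ?_, hR'0, fun g hg => ?_, ?_, fun K hKA β hβ => ?_⟩
  · obtain ⟨ι, _, b, -, rfl, -⟩ := hK K hKA
    exact isOpenSimplicialCone_posSpan b
  · ext h
    refine ⟨fun hh => ⟨γ h hh, (hR' _).2 ⟨h, hh, Or.inl rfl⟩, hγker h hh⟩, ?_⟩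
    rintro ⟨g, hg, rfl⟩
    obtain ⟨h, hh, hgh⟩ := (hR' g).1 hg
    change ker0 g ∈ (A : Set (Set (Vr n)))
    rwa [hker g h hh hgh]
  · obtain ⟨h, hh, rfl | rfl⟩ := (hR' g).1 hg
    exacts [(hR' _).2 ⟨h, hh, Or.inr rfl⟩, (hR' _).2 ⟨h, hh, Or.inl (neg_neg _)⟩]
  · rintro α hα β hβ ⟨c, rfl⟩
    obtain ⟨h₁, hh₁, hα'⟩ := (hR' α).1 hα
    obtain ⟨h₂, hh₂, hβ'⟩ := (hR' _).1 hβ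
    have hc : c ≠ 0 := by
      rintro rfl
      exact hR'0 _ hβ (zero_smul _ _)
    obtain rfl : h₂ = h₁ := by
      rw [← hker _ _ hh₂ hβ', ker0_smul hc, hker _ _ hh₁ hα']
    rcases hα' with rfl | rfl <;> rcases hβ' with hβ' | hβ'
    exacts [Or.inl hβ', Or.inr hβ', Or.inr (by rw [hβ', neg_neg]), Or.inl hβ']
  · have hspan := span_le_span_BK hAT hγmul
      (fun h hh => ⟨(hR' _).2 ⟨h, hh, Or.inl rfl⟩, (hR' _).2 ⟨h, hh, Or.inr rfl⟩⟩) (hK K hKA)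
    obtain ⟨h, hh, rfl | rfl⟩ := (hR' β).1 hβ
    exacts [hspan (hγT h hh), Submodule.neg_mem _ (hspan (hγT h hh))]

end FromChambers

section RestrictedArrangement

variable {r d : ℕ} {A : Finset (Set (Vr r))} {R : Finset (Vr r →ₗ[ℝ] ℝ)} {φ : Vr d →ₗ[ℝ] Vr r}
  {S' : Finset (Vr r →ₗ[ℝ] ℝ)}

theorem exists_isCrystArr_restrictArr (hcr : IsCrystArr A R) (hφ : Function.Injective φ)
    (hS' : S' ⊆ R) (hran : Set.range φ = {y | ∀ α ∈ S', α y = 0}) :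
    ∃ R', IsCrystArr (restrictArr A φ) R' :=
  exists_isCrystArr_of_isCrystChamber (coe_restrictArr hcr.hyps)
    (fun _ hf => (mem_restrictRoots.1 hf).2) fun _ hK =>
      isCrystChamber_of_mem_chambers_restrictArr hcr hφ hS' hran hK

end RestrictedArrangement

theorem exists_linearMap_injective_range_eq {r : ℕ} (E : Submodule ℝ (Vr r)) :
    ∃ (d : ℕ) (φ : Vr d →ₗ[ℝ] Vr r), Function.Injective φ ∧ Set.range φ = E := by
  refine ⟨_, E.subtype ∘ₗ (Module.finBasis ℝ E).equivFun.symm.toLinearMap,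
    E.injective_subtype.comp (Module.finBasis ℝ E).equivFun.symm.injective, ?_⟩
  rw [LinearMap.coe_comp, Set.range_comp, LinearEquiv.coe_toLinearMap,
    (Module.finBasis ℝ E).equivFun.symm.surjective.range_eq, Set.image_univ,
    Submodule.coe_subtype, Subtype.range_coe]

end Arrangement

open Arrangement in
theorem stmt13_general {r : ℕ} (A : Finset (Set (Vr r))) (R : Finset (Vr r →ₗ[ℝ] ℝ))
    (hcr : IsCrystArr A R) (S : Finset (Set (Vr r))) (hS : S ⊆ A) :
    ∃ (d : ℕ) (φ : Vr d →ₗ[ℝ] Vr r) (A' : Finset (Set (Vr d)))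
      (R' : Finset (Vr d →ₗ[ℝ] ℝ)),
      Function.Injective φ ∧ Set.range φ = ⋂₀ (S : Set (Set (Vr r))) ∧
      (A' : Set (Set (Vr d))) =
        { h | ∃ H ∈ A, ¬ (⋂₀ (S : Set (Set (Vr r))) ⊆ H) ∧ h = φ ⁻¹' H } ∧
      IsCrystArr A' R' := by
  classical
  set S' := R.filter fun α => ker0 α ∈ S
  have hE : ⋂₀ (S : Set (Set (Vr r))) = {x | ∀ α ∈ S', α x = 0} := by
    ext x
    refine ⟨fun hx α hα => hx _ (Finset.mem_filter.1 hα).2, fun hx H hH => ?_⟩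
    obtain ⟨α, hα, rfl⟩ : H ∈ (fun α => ker0 α) '' (R : Set _) :=
      hcr.hyps ▸ Finset.mem_coe.2 (hS hH)
    exact hx α (Finset.mem_filter.2 ⟨hα, hH⟩)
  obtain ⟨d, φ, hφ, hran⟩ :=
    exists_linearMap_injective_range_eq (⨅ α ∈ S', LinearMap.ker α)
  have hranE : Set.range φ = ⋂₀ (S : Set (Set (Vr r))) := by
    rw [hran, hE]
    ext x
    simp
  obtain ⟨R', hR'⟩ :=
    exists_isCrystArr_restrictArr hcr hφ (Finset.filter_subset _ R) (hranE.trans hE)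
  refine ⟨d, φ, restrictArr A φ, R', hφ, hranE, ?_, hR'⟩
  ext h
  simp [restrictArr, hranE, eq_comm, and_assoc]

/-- the restriction of a crystallographic arrangement to an
intersection `E` of its hyperplanes is again a crystallographic arrangement
(identifying `E` with `ℝ^d` via an injective linear map with range `E`). -/
theorem stmt13 {r : ℕ} (A : Finset (Set (Vr r))) (R : Finset (Vr r →ₗ[ℝ] ℝ))
    (hcr : IsCrystArr A R) (S : Finset (Set (Vr r))) (hS : S ⊆ A) (hSne : S.Nonempty) :
    ∃ (d : ℕ) (φ : Vr d →ₗ[ℝ] Vr r) (A' : Finset (Set (Vr d)))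
      (R' : Finset (Vr d →ₗ[ℝ] ℝ)),
      Function.Injective φ ∧ Set.range φ = ⋂₀ (S : Set (Set (Vr r))) ∧
      (A' : Set (Set (Vr d))) =
        { h | ∃ H ∈ A, ¬ (⋂₀ (S : Set (Set (Vr r))) ⊆ H) ∧ h = φ ⁻¹' H } ∧
      IsCrystArr A' R' :=
  stmt13_general A R hcr S hS
end

section
/- Let (A, R) be a crystallographic arrangement with fan Σ = Σ_R, and let Σ' be the Boolean fan of the arrangement {e_α^⊥ : α ∈ R} in ℝ^{2n}, where 2n = |R|. Then the map φ: N → N', n ↦ (α(n))_{α∈R}, is a map of fans, i.e., for every σ ∈ Σ there exists σ' ∈ Σ' with φ(σ) ⊆ σ'; moreover for every σ' ∈ Σ', the preimage φ^{-1}(σ') (equivalently φ(V) ∩ σ' pulled back) is a cone of Σ. -/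
open scoped Classical Pointwise BigOperators

/-- The cone of the Boolean fan determined by a sign vector `ε`. -/
def boolCone {ι : Type*} (ε : ι → SignType) : Set (ι → ℝ) :=
  { x | ∀ i, (ε i = SignType.pos → 0 ≤ x i) ∧ (ε i = SignType.zero → x i = 0) ∧
      (ε i = SignType.neg → x i ≤ 0) }

/-! The chambers are the sign cells `{x | 0 < β z * β x for all β ∈ R}` of generic points `z`,
and their closures are the weak sign cells `{x | 0 ≤ β z * β x}`; so a closed chamber, and
a fortiori an intersection of closed chambers, maps into a Boolean cone. Conversely, the preimage
`P` of a Boolean cone is an additive cone on which every root has constant sign. Pick `p` in its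
relative interior and push it slightly in a generic direction `c`: the chamber reached has a
closure containing `P`, and if `γ ≥ 0` on `P` then taking `γ c > 0` makes `γ ≥ 0` on that closure.
Hence every inequality defining `P` is cut out by a closed chamber containing `P`, and `P` is the
intersection of these closed chambers. -/

section SignCells

variable {V : Type*} [AddCommGroup V] [Module ℝ V] (R : Finset (V →ₗ[ℝ] ℝ))

def signCell (z : V) : Set V := {x | ∀ β ∈ R, 0 < β z * β x}

def closedSignCell (z : V) : Set V := {x | ∀ β ∈ R, 0 ≤ β z * β x}

/-- The closure of the face of the arrangement through `p`, i.e. of the set of points having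
the same sign vector as `p`. -/
def closedFace (p : V) : Set V := {y | ∀ β ∈ R, β y = 0 ∨ 0 < β p * β y}

lemma convex_signCell (z : V) : Convex ℝ (signCell R z) := by
  have : signCell R z = ⋂ β ∈ R, {x | 0 < (β z • β) x} := by ext; simp [signCell]
  rw [this]
  exact convex_iInter₂ fun β _ => convex_halfSpace_gt (β z • β).isLinear 0

lemma self_mem_signCell {z : V} (hz : ∀ β ∈ R, β z ≠ 0) : z ∈ signCell R z :=
  fun β hβ => mul_self_pos.2 (hz β hβ)

lemma signCell_subset {z : V} : signCell R z ⊆ {x | ∀ β ∈ R, β x ≠ 0} :=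
  fun _ hx β hβ => right_ne_zero_of_mul (hx β hβ).ne'

lemma openSegment_subset_signCell {z y : V} (hz : ∀ β ∈ R, β z ≠ 0)
    (hy : y ∈ closedSignCell R z) : openSegment ℝ z y ⊆ signCell R z := by
  rintro _ ⟨a, b, ha, hb, -, rfl⟩ β hβ
  have hzz := mul_self_pos.2 (hz β hβ)
  have hzy := hy β hβ
  simp only [map_add, map_smul, smul_eq_mul]
  nlinarith [mul_pos ha hzz, mul_nonneg hb.le hzy]

end SignCells

section Topology

variable {V : Type*} [NormedAddCommGroup V] [NormedSpace ℝ V] [FiniteDimensional ℝ V]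
  (R : Finset (V →ₗ[ℝ] ℝ))

lemma isClosed_closedSignCell (z : V) : IsClosed (closedSignCell R z) := by
  have : closedSignCell R z = ⋂ β ∈ R, {x | 0 ≤ (β z • β) x} := by ext; simp [closedSignCell]
  rw [this]
  exact isClosed_biInter fun β _ =>
    isClosed_le continuous_const (β z • β).continuous_of_finiteDimensional

lemma closure_signCell {z : V} (hz : ∀ β ∈ R, β z ≠ 0) :
    closure (signCell R z) = closedSignCell R z := by
  refine subset_antisymm (closure_minimal (fun x hx β hβ => (hx β hβ).le)
    (isClosed_closedSignCell R z)) fun y hy => ?_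
  exact closure_mono (openSegment_subset_signCell R hz hy)
    (segment_subset_closure_openSegment (right_mem_segment ℝ z y))

lemma connectedComponentIn_eq_signCell {z : V} (hz : ∀ β ∈ R, β z ≠ 0) :
    connectedComponentIn {x | ∀ β ∈ R, β x ≠ 0} z = signCell R z := by
  refine subset_antisymm (fun x hx β hβ => ?_)
    ((convex_signCell R z).isPreconnected.subset_connectedComponentIn
      (self_mem_signCell R hz) (signCell_subset R))
  set C := connectedComponentIn {x | ∀ β ∈ R, β x ≠ 0} z
  have hC : IsPreconnected ((fun x => β z * β x) '' C) :=
    isPreconnected_connectedComponentIn.image _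
      (continuous_const.mul β.continuous_of_finiteDimensional).continuousOn
  -- IVT: `β z * β ·` is positive at `z` and vanishes nowhere on `C`.
  by_contra! hneg
  obtain ⟨w, hwC, hw⟩ := hC.Icc_subset (Set.mem_image_of_mem _ hx)
    (Set.mem_image_of_mem _ (mem_connectedComponentIn hz)) ⟨hneg, (mul_self_pos.2 (hz β hβ)).le⟩
  exact connectedComponentIn_subset _ _ hwC β hβ ((mul_eq_zero.1 hw).resolve_left (hz β hβ))

end Topology

section Perturbation

lemma exists_forall_apply_ne_zero {k V : Type*} [Field k] [Infinite k] [AddCommGroup V]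
    [Module k V] (R : Finset (V →ₗ[k] k)) (hR : ∀ β ∈ R, β ≠ 0) :
    ∃ c : V, ∀ β ∈ R, β c ≠ 0 := by
  by_contra! h
  obtain ⟨β, hβ⟩ := Subspace.exists_eq_top_of_iUnion_eq_univ
    (p := fun β : R => LinearMap.ker (β : V →ₗ[k] k)) <| Set.eq_univ_of_forall fun c => by
      obtain ⟨β, hβR, hβc⟩ := h c
      exact Set.mem_iUnion.2 ⟨⟨β, hβR⟩, hβc⟩
  exact hR β β.2 (LinearMap.ker_eq_top.1 hβ)

variable {V : Type*} [AddCommGroup V] [Module ℝ V] (R : Finset (V →ₗ[ℝ] ℝ))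

lemma exists_forall_apply_ne_zero_and_pos (hR : ∀ β ∈ R, β ≠ 0) {γ : V →ₗ[ℝ] ℝ} (hγ : γ ∈ R) :
    ∃ c : V, (∀ β ∈ R, β c ≠ 0) ∧ 0 < γ c := by
  obtain ⟨c, hc⟩ := exists_forall_apply_ne_zero R hR
  rcases (hc γ hγ).lt_or_gt with hneg | hpos
  · exact ⟨-c, fun β hβ => by simpa using hc β hβ, by simpa using hneg⟩
  · exact ⟨c, hc, hpos⟩

/-- The point is `z = p + t • c` for small `t > 0`. -/
lemma exists_perturbation (p : V) {c : V} (hc : ∀ β ∈ R, β c ≠ 0) :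
    ∃ z : V, (∀ β ∈ R, β p ≠ 0 → 0 < β p * β z) ∧ (∀ β ∈ R, β p = 0 → 0 < β c * β z) := by
  have hsmall : ∀ᶠ t in nhdsWithin (0 : ℝ) (Set.Ioi 0),
      0 < t ∧ ∀ β ∈ R, β p ≠ 0 → 0 < β p * (β p + t * β c) := by
    refine eventually_mem_nhdsWithin.and (Filter.Eventually.filter_mono nhdsWithin_le_nhds ?_)
    refine (Filter.eventually_all_finset R).2 fun β _ => ?_
    by_cases hβp : β p = 0
    · exact Filter.Eventually.of_forall fun _ h => absurd hβp h
    have hcont : Continuous fun t : ℝ => β p * (β p + t * β c) := by fun_prop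
    filter_upwards [(hcont.tendsto 0).eventually_const_lt (u := 0) (by simpa using hβp)]
      with t ht using fun _ => ht
  obtain ⟨t, ht, hpt⟩ := hsmall.exists
  refine ⟨p + t • c, fun β hβ hβp => by simpa using hpt β hβ hβp, fun β hβ hβp => ?_⟩
  simpa [hβp, mul_left_comm] using mul_pos ht (mul_self_pos.2 (hc β hβ))

lemma closedFace_subset_closedSignCell {p z : V} (hpz : ∀ β ∈ R, β p ≠ 0 → 0 < β p * β z) :
    closedFace R p ⊆ closedSignCell R z := by
  intro y hy β hβ
  rcases hy β hβ with h | h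
  · simp [h]
  · have hz := hpz β hβ (left_ne_zero_of_mul h.ne')
    have := mul_pos h hz
    nlinarith [mul_self_nonneg (β p)]

/-- The point `p` is the sum, over `β ∈ R`, of a point of `P` at which `β` does not vanish
(if there is one). -/
lemma exists_mem_subset_closedFace {P : Set V} (h0 : 0 ∈ P)
    (hadd : ∀ x ∈ P, ∀ y ∈ P, x + y ∈ P)
    (hside : ∀ β ∈ R, (∀ y ∈ P, 0 ≤ β y) ∨ ∀ y ∈ P, β y ≤ 0) :
    ∃ p ∈ P, P ⊆ closedFace R p := by
  have hwit : ∀ β ∈ R, ∃ y ∈ P, ∀ x ∈ P, β x ≠ 0 → β y ≠ 0 := by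
    intro β _
    by_cases h : ∃ y ∈ P, β y ≠ 0
    · obtain ⟨y, hy, hβy⟩ := h
      exact ⟨y, hy, fun _ _ _ => hβy⟩
    · exact ⟨0, h0, fun x hx hx0 => (h ⟨x, hx, hx0⟩).elim⟩
  choose! g hgP hg using hwit
  set p := ∑ β ∈ R, g β
  have hpP : p ∈ P := Finset.sum_induction g (· ∈ P) (fun a b ha hb => hadd a ha b hb) h0 hgP
  have hpos : ∀ δ : V →ₗ[ℝ] ℝ, (∀ y ∈ P, 0 ≤ δ y) → ∀ β ∈ R, δ (g β) ≠ 0 → 0 < δ p := by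
    intro δ hδ β hβ hδβ
    calc 0 < δ (g β) := (hδ _ (hgP β hβ)).lt_of_ne' hδβ
      _ ≤ ∑ γ ∈ R, δ (g γ) := Finset.single_le_sum (fun γ hγ => hδ _ (hgP γ hγ)) hβ
      _ = δ p := (map_sum δ g R).symm
  refine ⟨p, hpP, fun y hy β hβ => or_iff_not_imp_left.2 fun hβy => ?_⟩
  have hβg := hg β hβ y hy hβy
  rcases hside β hβ with h | h
  · exact mul_pos (hpos β h β hβ hβg) ((h y hy).lt_of_ne' hβy)
  · have hneg := hpos (-β) (fun x hx => neg_nonneg.2 (h x hx)) β hβ (by simpa using hβg)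
    exact mul_pos_of_neg_of_neg (by simpa using hneg) ((h y hy).lt_of_ne hβy)

end Perturbation

section BoolCone

variable {ι : Type*}

lemma zero_mem_boolCone (ε : ι → SignType) : (0 : ι → ℝ) ∈ boolCone ε :=
  fun _ => ⟨fun _ => le_rfl, fun _ => rfl, fun _ => le_rfl⟩

lemma add_mem_boolCone {ε : ι → SignType} {x y : ι → ℝ} (hx : x ∈ boolCone ε)
    (hy : y ∈ boolCone ε) : x + y ∈ boolCone ε := fun i =>
  ⟨fun h => add_nonneg ((hx i).1 h) ((hy i).1 h),
    fun h => by simp [(hx i).2.1 h, (hy i).2.1 h],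
    fun h => add_nonpos ((hx i).2.2 h) ((hy i).2.2 h)⟩

lemma boolCone_nonneg_or_nonpos (ε : ι → SignType) (i : ι) :
    (∀ x ∈ boolCone ε, 0 ≤ x i) ∨ ∀ x ∈ boolCone ε, x i ≤ 0 := by
  cases h : ε i with
  | zero => exact Or.inl fun x hx => ((hx i).2.1 h).ge
  | neg => exact Or.inr fun x hx => (hx i).2.2 h
  | pos => exact Or.inl fun x hx => (hx i).1 h

lemma mem_boolCone_sign {x y : ι → ℝ} (hy : ∀ i, y i ≠ 0) (hxy : ∀ i, 0 ≤ y i * x i) :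
    x ∈ boolCone fun i => SignType.sign (y i) := fun i =>
  ⟨fun h => nonneg_of_mul_nonneg_right (hxy i) (sign_eq_one_iff.1 h),
    fun h => absurd (sign_eq_zero_iff.1 h) (hy i),
    fun h => nonpos_of_mul_nonneg_right (hxy i) (sign_eq_neg_one_iff.1 h)⟩

lemma mem_boolCone_of_forall {ε : ι → SignType} {w : ι → ℝ}
    (hnonneg : ∀ i, (∀ x ∈ boolCone ε, 0 ≤ x i) → 0 ≤ w i)
    (hnonpos : ∀ i, (∀ x ∈ boolCone ε, x i ≤ 0) → w i ≤ 0) : w ∈ boolCone ε := by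
  intro i
  refine ⟨fun h => hnonneg i fun x hx => (hx i).1 h, fun h => le_antisymm ?_ ?_,
    fun h => hnonpos i fun x hx => (hx i).2.2 h⟩
  · exact hnonpos i fun x hx => ((hx i).2.1 h).le
  · exact hnonneg i fun x hx => ((hx i).2.1 h).ge

end BoolCone

section Chambers

variable {r : ℕ} {A : Finset (Set (Vr r))} {R : Finset (Vr r →ₗ[ℝ] ℝ)}

lemma compl_sUnion_eq (hA : (A : Set (Set (Vr r))) = (fun α => ker0 α) '' (R : Set _)) :
    (⋃₀ (A : Set (Set (Vr r))))ᶜ = {x | ∀ β ∈ R, β x ≠ 0} := by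
  ext x
  simp [hA, ker0]

lemma chambers_eq (hA : (A : Set (Set (Vr r))) = (fun α => ker0 α) '' (R : Set _)) :
    chambers A = signCell R '' {z | ∀ β ∈ R, β z ≠ 0} := by
  ext K
  simp only [chambers, compl_sUnion_eq hA, Set.mem_ofPred_eq, Set.mem_image]
  refine exists_congr fun z => and_congr_right fun hz => ?_
  rw [connectedComponentIn_eq_signCell R hz, eq_comm]

lemma exists_chamber_closedFace_subset
    (hA : (A : Set (Set (Vr r))) = (fun α => ker0 α) '' (R : Set _)) (p : Vr r) {c : Vr r}
    (hc : ∀ β ∈ R, β c ≠ 0) :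
    ∃ K ∈ chambers A, closedFace R p ⊆ closure K ∧
      ∀ γ ∈ R, 0 ≤ γ p → 0 < γ c → ∀ x ∈ closure K, 0 ≤ γ x := by
  obtain ⟨z, hpz, hcz⟩ := exists_perturbation R p hc
  have hz : ∀ β ∈ R, β z ≠ 0 := fun β hβ => by
    by_cases hβp : β p = 0
    · exact right_ne_zero_of_mul (hcz β hβ hβp).ne'
    · exact right_ne_zero_of_mul (hpz β hβ hβp).ne'
  refine ⟨signCell R z, chambers_eq hA ▸ ⟨z, hz, rfl⟩, ?_, fun γ hγ hγp hγc x hx => ?_⟩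
  · rw [closure_signCell R hz]
    exact closedFace_subset_closedSignCell R hpz
  have hγz : 0 < γ z := by
    rcases hγp.eq_or_lt with hγp | hγp
    · exact pos_of_mul_pos_right (hcz γ hγ hγp.symm) hγc.le
    · exact pos_of_mul_pos_right (hpz γ hγ hγp.ne') hγp.le
  rw [closure_signCell R hz] at hx
  exact nonneg_of_mul_nonneg_right (hx γ hγ) hγz

end Chambers

section FanMap

variable {r : ℕ} {A : Finset (Set (Vr r))} {R : Finset (Vr r →ₗ[ℝ] ℝ)}

lemma image_closedChamberInts_subset_boolCone
    (hA : (A : Set (Set (Vr r))) = (fun α => ker0 α) '' (R : Set _))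
    {σ : Set (Vr r)} (hσ : σ ∈ closedChamberInts A) :
    ∃ ε : {α // α ∈ R} → SignType,
      (LinearMap.pi fun α : {α // α ∈ R} => (α : Vr r →ₗ[ℝ] ℝ)) '' σ ⊆ boolCone ε := by
  obtain ⟨S, ⟨K, hKS⟩, hS, rfl⟩ := hσ
  obtain ⟨z, hz, rfl⟩ := chambers_eq hA ▸ hS hKS
  refine ⟨fun α => SignType.sign ((α : Vr r →ₗ[ℝ] ℝ) z), ?_⟩
  rintro _ ⟨y, hy, rfl⟩
  have hyz : y ∈ closedSignCell R z := by
    rw [← closure_signCell R hz]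
    exact Set.sInter_subset_of_mem (Set.mem_image_of_mem closure hKS) hy
  exact mem_boolCone_sign (fun α => hz α α.2) fun α => hyz α α.2

lemma preimage_boolCone_mem_closedChamberInts (hcr : IsCrystArr A R)
    (ε : {α // α ∈ R} → SignType) :
    (LinearMap.pi fun α : {α // α ∈ R} => (α : Vr r →ₗ[ℝ] ℝ)) ⁻¹' boolCone ε ∈
      closedChamberInts A := by
  set P := (LinearMap.pi fun α : {α // α ∈ R} => (α : Vr r →ₗ[ℝ] ℝ)) ⁻¹' boolCone ε
  obtain ⟨p, hpP, hPp⟩ := exists_mem_subset_closedFace R (P := P)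
    (by simpa [P] using zero_mem_boolCone ε)
    (fun x hx y hy => by simpa [P] using add_mem_boolCone hx hy)
    (fun β hβ => (boolCone_nonneg_or_nonpos ε ⟨β, hβ⟩).imp
      (fun h y hy => h _ hy) (fun h y hy => h _ hy))
  have hchamber : ∀ γ ∈ R, (∀ y ∈ P, 0 ≤ γ y) →
      ∃ K ∈ chambers A, P ⊆ closure K ∧ ∀ x ∈ closure K, 0 ≤ γ x := by
    intro γ hγ hγP
    obtain ⟨c, hc, hγc⟩ := exists_forall_apply_ne_zero_and_pos R hcr.nonzero hγ
    obtain ⟨K, hK, hpK, hγK⟩ := exists_chamber_closedFace_subset hcr.hyps p hc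
    exact ⟨K, hK, hPp.trans hpK, hγK γ hγ (hγP p hpP) hγc⟩
  refine ⟨{K | K ∈ chambers A ∧ P ⊆ closure K}, ?_, fun K hK => hK.1, ?_⟩
  · obtain ⟨c, hc⟩ := exists_forall_apply_ne_zero R hcr.nonzero
    obtain ⟨K, hK, hpK, -⟩ := exists_chamber_closedFace_subset hcr.hyps p hc
    exact ⟨K, hK, hPp.trans hpK⟩
  refine subset_antisymm (fun y hy => Set.mem_sInter.2 ?_) fun w hw => ?_
  · rintro _ ⟨K, hK, rfl⟩
    exact hK.2 hy
  have hwP : ∀ γ ∈ R, (∀ y ∈ P, 0 ≤ γ y) → 0 ≤ γ w := fun γ hγ hγP => by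
    obtain ⟨K, hK, hPK, hγK⟩ := hchamber γ hγ hγP
    exact hγK w (hw _ ⟨K, ⟨hK, hPK⟩, rfl⟩)
  refine mem_boolCone_of_forall (fun α hα => hwP α α.2 fun y hy => hα _ hy) fun α hα => ?_
  simpa using hwP (-α) (hcr.neg_mem α α.2) fun y hy => by simpa using hα _ hy

end FanMap

/-- `φ : n ↦ (α(n))_{α ∈ R}` is a map of fans from `Σ_R` to the
Boolean fan, and the preimage of every Boolean cone is a cone of `Σ_R`. -/
theorem stmt15 {r : ℕ} (A : Finset (Set (Vr r))) (R : Finset (Vr r →ₗ[ℝ] ℝ))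
    (hcr : IsCrystArr A R) :
    (∀ σ ∈ closedChamberInts A, ∃ ε : {α // α ∈ R} → SignType,
      (LinearMap.pi fun α : {α // α ∈ R} => (α : Vr r →ₗ[ℝ] ℝ)) '' σ ⊆ boolCone ε) ∧
    ∀ ε : {α // α ∈ R} → SignType,
      (LinearMap.pi fun α : {α // α ∈ R} => (α : Vr r →ₗ[ℝ] ℝ)) ⁻¹' boolCone ε ∈
        closedChamberInts A :=
  ⟨fun _ hσ => image_closedChamberInts_subset_boolCone hcr.hyps hσ,
    preimage_boolCone_mem_closedChamberInts hcr⟩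
end

section
/- Let n_1, …, n_{2t} be the primitive ray generators, in counterclockwise order, of a smooth complete centrally symmetric fan in ℤ^2 (so n_{t+j} = −n_j), with self-intersection weights a_j defined by n_{j−1} + a_j n_j + n_{j+1} = 0 (indices mod 2t). Then a_{t+j} = a_j for 1 ≤ j ≤ t, and the product of matrices ((0,−1),(1,−a_t)) ⋯ ((0,−1),(1,−a_1)) equals −Id. -/
/-- for a smooth complete centrally symmetric fan in ℤ² with primitive
ray generators `n_1, …, n_{2t}` in counterclockwise order (`n_{t+j} = −n_j`) and
weights `a_j` given by `n_{j−1} + a_j n_j + n_{j+1} = 0`, one has `a_{t+j} = a_j` and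
`((0,−1),(1,−a_t)) ⋯ ((0,−1),(1,−a_1)) = −Id`. -/
theorem stmt18 (t : ℕ) (ht : 0 < t) (n : ZMod (2 * t) → ℤ × ℤ) (a : ZMod (2 * t) → ℤ)
    (hprim : ∀ j, IsCoprime (n j).1 (n j).2)
    (hdet : ∀ j, (n j).1 * (n (j + 1)).2 - (n j).2 * (n (j + 1)).1 = 1)
    (hrel : ∀ j, n (j - 1) + a j • n j + n (j + 1) = 0)
    (hsym : ∀ j, n (j + (t : ZMod (2 * t))) = -n j) :
    (∀ j, a (j + (t : ZMod (2 * t))) = a j) ∧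
    ((List.range t).map
        (fun k => !![(0 : ℤ), -1; 1, -a (((t - k : ℕ) : ZMod (2 * t)))])).prod =
      -1 := by
  have hnz : ∀ j, n j ≠ 0 := by
    intro j h
    have h0 := hprim j
    rw [h] at h0
    simp only [Prod.fst_zero, Prod.snd_zero] at h0
    exact not_isCoprime_zero_zero h0
  -- components of hrel
  have hrel1 : ∀ j, (n (j - 1)).1 + a j * (n j).1 + (n (j + 1)).1 = 0 := by
    intro j
    have := congrArg Prod.fst (hrel j)
    simpa [smul_eq_mul] using this
  have hrel2 : ∀ j, (n (j - 1)).2 + a j * (n j).2 + (n (j + 1)).2 = 0 := by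
    intro j
    have := congrArg Prod.snd (hrel j)
    simpa [smul_eq_mul] using this
  have ha : ∀ j, a (j + (t : ZMod (2 * t))) = a j := by
    intro j
    have h1a := hrel1 j
    have h1b := hrel2 j
    have h2a := hrel1 (j + (t : ZMod (2 * t)))
    have h2b := hrel2 (j + (t : ZMod (2 * t)))
    rw [show j + (t : ZMod (2 * t)) - 1 = (j - 1) + t by ring,
        show j + (t : ZMod (2 * t)) + 1 = (j + 1) + t by ring,
        hsym, hsym, hsym] at h2a h2b
    simp only [Prod.fst_neg, Prod.snd_neg] at h2a h2b
    have key1 : (a (j + (t : ZMod (2 * t))) - a j) * (n j).1 = 0 := by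
      linear_combination -h1a - h2a
    have key2 : (a (j + (t : ZMod (2 * t))) - a j) * (n j).2 = 0 := by
      linear_combination -h1b - h2b
    by_contra hne
    have hd : a (j + (t : ZMod (2 * t))) - a j ≠ 0 := sub_ne_zero.mpr hne
    have e1 : (n j).1 = 0 := by
      rcases mul_eq_zero.mp key1 with h | h
      · exact absurd h hd
      · exact h
    have e2 : (n j).2 = 0 := by
      rcases mul_eq_zero.mp key2 with h | h
      · exact absurd h hd
      · exact h
    exact hnz j (Prod.ext e1 e2)
  refine ⟨ha, ?_⟩
  -- the transfer matrices
  set B : ZMod (2 * t) → Matrix (Fin 2) (Fin 2) ℤ :=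
    fun j => !![-(n j).1, -(n j).2; (n (j + 1)).1, (n (j + 1)).2] with hB
  have key : ∀ j : ZMod (2 * t), !![(0 : ℤ), -1; 1, -a j] * B (j - 1) = B j := by
    intro j
    have e : j - 1 + 1 = j := by ring
    have r1 := hrel1 j
    have r2 := hrel2 j
    rw [hB]
    ext i k
    fin_cases i <;> fin_cases k <;>
      simp [Matrix.mul_apply, Fin.sum_univ_succ, e] <;> linarith
  -- induction on the partial products
  have main : ∀ m, m ≤ t →
      ((List.range m).map
        (fun k => !![(0 : ℤ), -1; 1, -a (((t - k : ℕ) : ZMod (2 * t)))])).prod *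
        B ((t - m : ℕ)) = B ((t : ℕ)) := by
    intro m
    induction m with
    | zero => intro _; simp
    | succ m ih =>
      intro hm
      have hm' : m ≤ t := Nat.le_of_succ_le hm
      have hlt : m < t := hm
      rw [List.range_succ, List.map_append, List.prod_append]
      simp only [List.map_cons, List.map_nil, List.prod_cons, List.prod_nil, mul_one]
      have hcast : ((t - (m + 1) : ℕ) : ZMod (2 * t)) = ((t - m : ℕ) : ZMod (2 * t)) - 1 := by
        have h1 : (1 : ℕ) ≤ t - m := by omega
        have : (t - (m + 1) : ℕ) = (t - m) - 1 := by omega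
        rw [this, Nat.cast_sub h1, Nat.cast_one]
      rw [hcast, mul_assoc, key (((t - m : ℕ) : ZMod (2 * t))), ih hm']
  have hfin := main t le_rfl
  rw [Nat.sub_self, Nat.cast_zero] at hfin
  -- B t = -B 0
  have hBt : B ((t : ℕ)) = -B 0 := by
    have h1 := hsym 0
    rw [zero_add] at h1
    have h2 := hsym 1
    have e1 : ((t : ℕ) : ZMod (2 * t)) + 1 = 1 + (t : ZMod (2 * t)) := by ring
    rw [hB]
    simp only [e1, h1, h2, Prod.fst_neg, Prod.snd_neg]
    ext i k
    fin_cases i <;> fin_cases k <;> simp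
  rw [hBt] at hfin
  -- B 0 is invertible, cancel
  have hdet0 : (B 0).det = -1 := by
    rw [hB]
    simp only [Matrix.det_fin_two_of]
    linear_combination -hdet 0
  have hu : IsUnit (B 0).det := by
    rw [hdet0]; exact isUnit_one.neg
  have hinv := Matrix.mul_nonsing_inv (B 0) hu
  calc ((List.range t).map
        (fun k => !![(0 : ℤ), -1; 1, -a (((t - k : ℕ) : ZMod (2 * t)))])).prod
      = ((List.range t).map
        (fun k => !![(0 : ℤ), -1; 1, -a (((t - k : ℕ) : ZMod (2 * t)))])).prod *
          (B 0 * (B 0)⁻¹) := by rw [hinv, mul_one]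
    _ = (-B 0) * (B 0)⁻¹ := by rw [← mul_assoc, hfin]
    _ = -(B 0 * (B 0)⁻¹) := by rw [neg_mul]
    _ = -1 := by rw [hinv]
end
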